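/- arXiv:2110.14386 — 16 statements merged into one kernel-verified Lean document; each statement's English description precedes it below -/
import Mathlib

section
/- Let (S, I₁, I₂, I₁₂, R) be a solution of the coinfection model with all components nonnegative and S(0) > 0. Then for all t ≥ 0, S(t) ≤ 1 / ( (1/S**)(1 − e^{−(b−μ₀)t}) + (1/S(0)) e^{−(b−μ₀)t} ). In particular S(t) ≤ max{S**, S(0)} for all t ≥ 0, and limsup_{t→∞} S(t) ≤ S**. -/
open Filter Topology Set

/-!
Since `N ≥ S` and every infection term in `S'` is nonnegative, `S` is a subsolution of the
logistic equation `x' = r x (1 - x / S**)` with `r = b - μ₀`. For a positive subsolution `x`,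
the quantity `e^{rt} / x(t) - (e^{rt} - 1) / S**` is nondecreasing, which is exactly the
comparison with the explicit logistic solution; its limit `S**` bounds the `limsup`. Positivity
of `S` holds because `S' = a S` with `a` continuous, so `S e^{-Cs}` is nondecreasing on `[0, t]`
once `a ≥ C` there.
-/

/-- The solution of `x' = r x (1 - x / M)` with `x 0 = x₀`. -/
noncomputable def logisticSolution (M x₀ r t : ℝ) : ℝ :=
  1 / ((1 / M) * (1 - Real.exp (-r * t)) + (1 / x₀) * Real.exp (-r * t))

lemma monotoneOn_of_hasDerivAt_nonneg {D : Set ℝ} (hD : Convex ℝ D) {f f' : ℝ → ℝ}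
    (hf : ∀ x ∈ D, HasDerivAt f (f' x) x) (hf'₀ : ∀ x ∈ interior D, 0 ≤ f' x) :
    MonotoneOn f D :=
  monotoneOn_of_hasDerivWithinAt_nonneg hD (fun x hx => (hf x hx).continuousAt.continuousWithinAt)
    (fun x hx => (hf x (interior_subset hx)).hasDerivWithinAt) hf'₀

lemma pos_of_hasDerivAt_mul_self {f a : ℝ → ℝ} (ha : ContinuousOn a (Ici 0))
    (hf : ∀ t ≥ 0, HasDerivAt f (a t * f t) t) (hf_nonneg : ∀ t ≥ 0, 0 ≤ f t) (h0 : 0 < f 0)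
    {t : ℝ} (ht : 0 ≤ t) : 0 < f t := by
  obtain ⟨C, hC⟩ : BddBelow (a '' Icc 0 t) :=
    (isCompact_Icc.image_of_continuousOn (ha.mono Icc_subset_Ici_self)).bddBelow
  have hderiv : ∀ s ∈ Icc 0 t, HasDerivAt (fun s => f s * Real.exp (-C * s))
      ((a s - C) * f s * Real.exp (-C * s)) s := fun s hs =>
    ((hf s hs.1).mul ((hasDerivAt_id s).const_mul (-C)).exp).congr_deriv (by simp only [id]; ring)
  have hmono := monotoneOn_of_hasDerivAt_nonneg (convex_Icc 0 t) hderiv fun s hs => by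
    have hs : s ∈ Icc 0 t := interior_subset hs
    have : C ≤ a s := hC (mem_image_of_mem a hs)
    have := hf_nonneg s hs.1
    positivity
  have := hmono (left_mem_Icc.2 ht) (right_mem_Icc.2 ht) ht
  simp only [mul_zero, Real.exp_zero, mul_one] at this
  exact pos_of_mul_pos_left (h0.trans_le this) (Real.exp_pos _).le

lemma one_div_le_one_div_of_hasDerivAt_le_logistic {f f' : ℝ → ℝ} {r M : ℝ}
    (hf : ∀ t ≥ 0, HasDerivAt f (f' t) t) (hpos : ∀ t ≥ 0, 0 < f t)
    (hle : ∀ t ≥ 0, f' t ≤ r * f t * (1 - f t / M)) {t : ℝ} (ht : 0 ≤ t) :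
    (1 / M) * (1 - Real.exp (-r * t)) + (1 / f 0) * Real.exp (-r * t) ≤ 1 / f t := by
  have hexp (s : ℝ) : HasDerivAt (fun s => Real.exp (r * s)) (r * Real.exp (r * s)) s := by
    simpa [mul_comm] using ((hasDerivAt_id s).const_mul r).exp
  -- `y = 1 / f` satisfies `y' ≥ r (1 / M - y)`, so `e^{rs} (y - 1 / M)` is nondecreasing
  have hderiv : ∀ s ∈ Ici (0 : ℝ), HasDerivAt
      (fun s => Real.exp (r * s) / f s - (Real.exp (r * s) - 1) / M)
      ((r * Real.exp (r * s) * f s - Real.exp (r * s) * f' s) / f s ^ 2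
        - r * Real.exp (r * s) / M) s := fun s hs =>
    ((hexp s).div (hf s hs) (hpos s hs).ne').sub (((hexp s).sub_const 1).div_const M)
  have hmono := monotoneOn_of_hasDerivAt_nonneg (convex_Ici 0) hderiv fun s hs => by
    have hs : 0 ≤ s := interior_subset hs
    have hfs := hpos s hs
    have hslack : 0 ≤ r * f s * (1 - f s / M) - f' s := sub_nonneg.2 (hle s hs)
    calc (0 : ℝ) ≤ Real.exp (r * s) / f s ^ 2 * (r * f s * (1 - f s / M) - f' s) := by positivity
      _ = _ := by field_simp; ring
  have hgt := hmono self_mem_Ici ht ht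
  simp only [mul_zero, Real.exp_zero, sub_self, zero_div, sub_zero] at hgt
  have hE := Real.exp_pos (r * t)
  rw [neg_mul, Real.exp_neg]
  calc (1 / M) * (1 - (Real.exp (r * t))⁻¹) + (1 / f 0) * (Real.exp (r * t))⁻¹
      = (1 / f 0 + (Real.exp (r * t) - 1) / M) / Real.exp (r * t) := by field_simp; ring
    _ ≤ (Real.exp (r * t) / f t) / Real.exp (r * t) := by gcongr; linarith
    _ = 1 / f t := by field_simp

lemma one_div_max_le_logistic_denom {M x₀ r t : ℝ} (hM : 0 < M) (hx₀ : 0 < x₀) (hr : 0 ≤ r)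
    (ht : 0 ≤ t) :
    1 / max M x₀ ≤ (1 / M) * (1 - Real.exp (-r * t)) + (1 / x₀) * Real.exp (-r * t) := by
  have hθ : Real.exp (-r * t) ≤ 1 :=
    Real.exp_le_one_iff.2 (neg_mul r t ▸ neg_nonpos.2 (mul_nonneg hr ht))
  have hM' : 1 / max M x₀ ≤ 1 / M := one_div_le_one_div_of_le hM (le_max_left M x₀)
  have hx₀' : 1 / max M x₀ ≤ 1 / x₀ := one_div_le_one_div_of_le hx₀ (le_max_right M x₀)
  calc 1 / max M x₀
      = (1 / max M x₀) * (1 - Real.exp (-r * t)) + (1 / max M x₀) * Real.exp (-r * t) := by ring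
    _ ≤ _ := by gcongr

lemma logisticSolution_le_max {M x₀ r t : ℝ} (hM : 0 < M) (hx₀ : 0 < x₀) (hr : 0 ≤ r)
    (ht : 0 ≤ t) : logisticSolution M x₀ r t ≤ max M x₀ :=
  calc logisticSolution M x₀ r t ≤ 1 / (1 / max M x₀) :=
        one_div_le_one_div_of_le (by positivity) (one_div_max_le_logistic_denom hM hx₀ hr ht)
    _ = max M x₀ := one_div_one_div _

lemma le_logisticSolution_of_hasDerivAt_le {f f' : ℝ → ℝ} {r M : ℝ} (hM : 0 < M) (hr : 0 ≤ r)
    (hf : ∀ t ≥ 0, HasDerivAt f (f' t) t) (hpos : ∀ t ≥ 0, 0 < f t)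
    (hle : ∀ t ≥ 0, f' t ≤ r * f t * (1 - f t / M)) {t : ℝ} (ht : 0 ≤ t) :
    f t ≤ logisticSolution M (f 0) r t := by
  have hdenom := one_div_max_le_logistic_denom hM (hpos 0 le_rfl) hr ht
  refine (le_one_div (hpos t ht) (lt_of_lt_of_le (by positivity) hdenom)).2 ?_
  exact one_div_le_one_div_of_hasDerivAt_le_logistic hf hpos hle ht

lemma tendsto_logisticSolution {M x₀ r : ℝ} (hM : M ≠ 0) (hr : 0 < r) :
    Tendsto (logisticSolution M x₀ r) atTop (𝓝 M) := by
  have hexp : Tendsto (fun t => Real.exp (-r * t)) atTop (𝓝 0) := by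
    simpa only [neg_mul, Function.comp_def, id] using
      Real.tendsto_exp_neg_atTop_nhds_zero.comp (tendsto_id.const_mul_atTop hr)
  have hdenom := (((tendsto_const_nhds (x := (1 : ℝ))).sub hexp).const_mul (1 / M)).add
    (hexp.const_mul (1 / x₀))
  convert hdenom.inv₀ (by simpa using hM) using 2
  · exact one_div _
  · simp

lemma limsup_le_of_eventually_le_of_tendsto {α : Type*} {l : Filter α} [l.NeBot]
    {f g : α → ℝ} {L : ℝ} (hf : IsBoundedUnder (· ≥ ·) l f) (hfg : f ≤ᶠ[l] g)
    (hg : Tendsto g l (𝓝 L)) : limsup f l ≤ L :=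
  (limsup_le_limsup hfg hf.isCoboundedUnder_le hg.isBoundedUnder_le).trans_eq hg.limsup_eq

lemma susceptible_rate_le_logistic {b K μ₀ α₁ α₂ c S I₁ I₂ I₁₂ R : ℝ} (hb : 0 < b) (hK : 0 < K)
    (hbμ₀ : μ₀ < b) (hα₁ : 0 ≤ α₁) (hα₂ : 0 ≤ α₂) (hc : 0 ≤ c) (hS : 0 ≤ S) (hI₁ : 0 ≤ I₁)
    (hI₂ : 0 ≤ I₂) (hI₁₂ : 0 ≤ I₁₂) (hR : 0 ≤ R) :
    (b * (1 - (S + I₁ + I₂ + I₁₂ + R) / K) - α₁ * I₁ - α₂ * I₂ - c * I₁₂ - μ₀) * S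
      ≤ (b - μ₀) * S * (1 - S / (K * (b - μ₀) / b)) := by
  have hr : b - μ₀ ≠ 0 := (sub_pos.2 hbμ₀).ne'
  have hlogistic : (b - μ₀) * S * (1 - S / (K * (b - μ₀) / b)) = (b - μ₀) * S - b / K * S * S := by
    field_simp
  have hloss : 0 ≤ (b / K * (I₁ + I₂ + I₁₂ + R) + α₁ * I₁ + α₂ * I₂ + c * I₁₂) * S := by positivity
  have hrate : (b * (1 - (S + I₁ + I₂ + I₁₂ + R) / K) - α₁ * I₁ - α₂ * I₂ - c * I₁₂ - μ₀) * S
      = (b - μ₀) * S - b / K * S * S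
        - (b / K * (I₁ + I₂ + I₁₂ + R) + α₁ * I₁ + α₂ * I₂ + c * I₁₂) * S := by ring
  rw [hlogistic, hrate]
  linarith

theorem stmt_0_general
    (b K α1 α2 α3 β1 β2 γ1 γ2 η1 η2 ρ1 ρ2 ρ3 μ0 μ4' : ℝ)
    (hb : 0 < b) (hK : 0 < K) (hα1 : 0 < α1) (hα2 : 0 < α2) (hα3 : 0 < α3)
    (hβ1 : 0 < β1) (hβ2 : 0 < β2)
    (hbμ0 : μ0 < b)
    (μ1 μ2 μ3 : ℝ)
    (S I1 I2 I12 R N : ℝ → ℝ)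
    (hN : ∀ t, N t = S t + I1 t + I2 t + I12 t + R t)
    (hS : ∀ t ≥ (0:ℝ), HasDerivAt S
      ((b * (1 - N t / K) - α1 * I1 t - α2 * I2 t - (β1 + β2 + α3) * I12 t - μ0) * S t) t)
    (hI1 : ∀ t ≥ (0:ℝ), HasDerivAt I1
      ((b * (1 - N t / K) + α1 * S t - η1 * I12 t - γ1 * I2 t - μ1) * I1 t
        + β1 * S t * I12 t) t)
    (hI2 : ∀ t ≥ (0:ℝ), HasDerivAt I2
      ((b * (1 - N t / K) + α2 * S t - η2 * I12 t - γ2 * I1 t - μ2) * I2 t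
        + β2 * S t * I12 t) t)
    (hI12 : ∀ t ≥ (0:ℝ), HasDerivAt I12
      ((b * (1 - N t / K) + α3 * S t + η1 * I1 t + η2 * I2 t - μ3) * I12 t
        + (γ1 + γ2) * I1 t * I2 t) t)
    (hR : ∀ t ≥ (0:ℝ), HasDerivAt R
      ((b * (1 - N t / K) - μ4') * R t + ρ1 * I1 t + ρ2 * I2 t + ρ3 * I12 t) t)
    (hnonneg : ∀ t ≥ (0:ℝ), 0 ≤ S t ∧ 0 ≤ I1 t ∧ 0 ≤ I2 t ∧ 0 ≤ I12 t ∧ 0 ≤ R t)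
    (hS0 : 0 < S 0)
    (Sss : ℝ) (hSss : Sss = K * (b - μ0) / b) :
    (∀ t ≥ (0:ℝ), S t ≤ 1 / ((1 / Sss) * (1 - Real.exp (-(b - μ0) * t))
        + (1 / S 0) * Real.exp (-(b - μ0) * t)))
    ∧ (∀ t ≥ (0:ℝ), S t ≤ max Sss (S 0))
    ∧ limsup S atTop ≤ Sss := by
  have hr : 0 < b - μ0 := sub_pos.2 hbμ0
  have hSss_pos : 0 < Sss := hSss ▸ by positivity
  have hrate_cont : ContinuousOn (fun t => b * (1 - N t / K) - α1 * I1 t - α2 * I2 t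
      - (β1 + β2 + α3) * I12 t - μ0) (Ici 0) := fun t ht => by
    have hS_cont := (hS t ht).continuousAt
    have hI1_cont := (hI1 t ht).continuousAt
    have hI2_cont := (hI2 t ht).continuousAt
    have hI12_cont := (hI12 t ht).continuousAt
    have hR_cont := (hR t ht).continuousAt
    have hN_cont : ContinuousAt N t := by rw [funext hN]; fun_prop
    exact ContinuousAt.continuousWithinAt (by fun_prop)
  have hS_pos : ∀ t ≥ 0, 0 < S t := fun t ht =>
    pos_of_hasDerivAt_mul_self hrate_cont hS (fun s hs => (hnonneg s hs).1) hS0 ht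
  have hS_le : ∀ t ≥ 0, S t ≤ logisticSolution Sss (S 0) (b - μ0) t :=
    fun t ht => le_logisticSolution_of_hasDerivAt_le hSss_pos hr.le hS hS_pos (fun s hs => by
      obtain ⟨hSs, hI1s, hI2s, hI12s, hRs⟩ := hnonneg s hs
      rw [hN s, hSss]
      exact susceptible_rate_le_logistic hb hK hbμ0 hα1.le hα2.le (by positivity)
        hSs hI1s hI2s hI12s hRs) ht
  refine ⟨hS_le, fun t ht => (hS_le t ht).trans (logisticSolution_le_max hSss_pos hS0 hr.le ht),
    limsup_le_of_eventually_le_of_tendsto ?_ ((eventually_ge_atTop 0).mono hS_le)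
      (tendsto_logisticSolution hSss_pos.ne' hr)⟩
  exact ⟨0, eventually_map.2 <| (eventually_ge_atTop 0).mono fun t ht => (hnonneg t ht).1⟩

/-- For a nonnegative solution of the coinfection model with `S 0 > 0`,
`S t ≤ 1 / ((1/S**)(1 - e^{-(b-μ₀)t}) + (1/S 0) e^{-(b-μ₀)t})` for all `t ≥ 0`;
in particular `S t ≤ max S** (S 0)` and `limsup S ≤ S**`. -/
theorem stmt_0
    (b K α1 α2 α3 β1 β2 γ1 γ2 η1 η2 ρ1 ρ2 ρ3 μ0 μ1' μ2' μ3' μ4' : ℝ)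
    (hb : 0 < b) (hK : 0 < K) (hα1 : 0 < α1) (hα2 : 0 < α2) (hα3 : 0 < α3)
    (hβ1 : 0 < β1) (hβ2 : 0 < β2) (hγ1 : 0 < γ1) (hγ2 : 0 < γ2)
    (hη1 : 0 < η1) (hη2 : 0 < η2) (hρ1 : 0 < ρ1) (hρ2 : 0 < ρ2) (hρ3 : 0 < ρ3)
    (hμ0 : 0 < μ0) (hμ1' : 0 < μ1') (hμ2' : 0 < μ2') (hμ3' : 0 < μ3') (hμ4' : 0 < μ4')
    (hbμ0 : μ0 < b)
    (μ1 μ2 μ3 : ℝ) (hμ1 : μ1 = ρ1 + μ1') (hμ2 : μ2 = ρ2 + μ2') (hμ3 : μ3 = ρ3 + μ3')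
    (S I1 I2 I12 R N : ℝ → ℝ)
    (hN : ∀ t, N t = S t + I1 t + I2 t + I12 t + R t)
    (hS : ∀ t ≥ (0:ℝ), HasDerivAt S
      ((b * (1 - N t / K) - α1 * I1 t - α2 * I2 t - (β1 + β2 + α3) * I12 t - μ0) * S t) t)
    (hI1 : ∀ t ≥ (0:ℝ), HasDerivAt I1
      ((b * (1 - N t / K) + α1 * S t - η1 * I12 t - γ1 * I2 t - μ1) * I1 t
        + β1 * S t * I12 t) t)
    (hI2 : ∀ t ≥ (0:ℝ), HasDerivAt I2
      ((b * (1 - N t / K) + α2 * S t - η2 * I12 t - γ2 * I1 t - μ2) * I2 t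
        + β2 * S t * I12 t) t)
    (hI12 : ∀ t ≥ (0:ℝ), HasDerivAt I12
      ((b * (1 - N t / K) + α3 * S t + η1 * I1 t + η2 * I2 t - μ3) * I12 t
        + (γ1 + γ2) * I1 t * I2 t) t)
    (hR : ∀ t ≥ (0:ℝ), HasDerivAt R
      ((b * (1 - N t / K) - μ4') * R t + ρ1 * I1 t + ρ2 * I2 t + ρ3 * I12 t) t)
    (hnonneg : ∀ t ≥ (0:ℝ), 0 ≤ S t ∧ 0 ≤ I1 t ∧ 0 ≤ I2 t ∧ 0 ≤ I12 t ∧ 0 ≤ R t)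
    (hS0 : 0 < S 0)
    (Sss : ℝ) (hSss : Sss = K * (b - μ0) / b) :
    (∀ t ≥ (0:ℝ), S t ≤ 1 / ((1 / Sss) * (1 - Real.exp (-(b - μ0) * t))
        + (1 / S 0) * Real.exp (-(b - μ0) * t)))
    ∧ (∀ t ≥ (0:ℝ), S t ≤ max Sss (S 0))
    ∧ limsup S atTop ≤ Sss :=
  stmt_0_general b K α1 α2 α3 β1 β2 γ1 γ2 η1 η2 ρ1 ρ2 ρ3 μ0 μ4' hb hK hα1 hα2 hα3 hβ1 hβ2 hbμ0 μ1 μ2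
    μ3 S I1 I2 I12 R N hN hS hI1 hI2 hI12 hR hnonneg hS0 Sss hSss
end

section
/- Let (S, I₁, I₂, I₁₂, R) be a solution of the coinfection model with all components nonnegative, N(0) > 0, and death rates satisfying μ₀ < μ₄' and μ₀ < μⱼ' for j = 1,2,3. Then for all t ≥ 0, the total population N = S+I₁+I₂+I₁₂+R satisfies N(t) ≤ 1 / ( (1/S**)(1 − e^{−(b−μ₀)t}) + (1/N(0)) e^{−(b−μ₀)t} ). In particular N(t) ≤ max{S**, N(0)} for all t ≥ 0, and limsup_{t→∞} N(t) ≤ S**. -/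
/-!
Summing the five equations, the infection terms cancel and `N' = b N (1 - N/K) - m` with
`m = μ₀ S + μ₁' I₁ + μ₂' I₂ + μ₃' I₁₂ + μ₄' R`. Nonnegativity of the compartments gives
`μ₀ N ≤ m ≤ M N` for the largest death rate `M`. The upper estimate makes `N` a
supersolution of a linear equation, so `N` stays positive; the lower one makes it a
subsolution of the logistic equation `N' = (b - μ₀) N (1 - N / S**)`, and for `u = 1/N` the
quantity `e^{(b-μ₀)t} (u - 1/S**)` is nondecreasing. This yields the explicit bound, which is
a weighted harmonic mean of `S**` and `N(0)` and tends to `S**`.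
-/

open Filter Topology Set Real

theorem monotoneOn_Ici_of_hasDerivAt_nonneg {f f' : ℝ → ℝ} {a : ℝ}
    (hf : ∀ t ∈ Ici a, HasDerivAt f (f' t) t) (hf' : ∀ t ∈ Ici a, 0 ≤ f' t) :
    MonotoneOn f (Ici a) :=
  monotoneOn_of_hasDerivWithinAt_nonneg (convex_Ici a)
    (fun t ht => (hf t ht).continuousAt.continuousWithinAt)
    (fun t ht => (hf t (interior_subset ht)).hasDerivWithinAt)
    (fun t ht => hf' t (interior_subset ht))

/-- Integrating factor `exp (-∫ₐᵗ c)`, with `c` extended to the left of `a` by `c a`. -/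
theorem pos_of_mul_le_hasDerivAt {x x' c : ℝ → ℝ} {a : ℝ} (hc : ContinuousOn c (Ici a))
    (hx : ∀ t ∈ Ici a, HasDerivAt x (x' t) t) (hle : ∀ t ∈ Ici a, c t * x t ≤ x' t)
    (ha : 0 < x a) : ∀ t ∈ Ici a, 0 < x t := by
  set C : ℝ → ℝ := fun t => ∫ s in a..t, c (max a s)
  have hc' : Continuous fun s => c (max a s) :=
    hc.comp_continuous (continuous_const.max continuous_id) (le_max_left a)
  have hC : ∀ t, HasDerivAt C (c (max a t)) t := fun t =>
    (hc'.integral_hasStrictDerivAt a t).hasDerivAt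
  have hmono : MonotoneOn (fun t => x t * exp (-C t)) (Ici a) := by
    refine monotoneOn_Ici_of_hasDerivAt_nonneg (fun t ht => (hx t ht).mul (hC t).neg.exp)
      (fun t ht => ?_)
    rw [Pi.neg_apply, max_eq_right (mem_Ici.1 ht)]
    nlinarith [hle t ht, exp_pos (-C t)]
  intro t ht
  have h := hmono self_mem_Ici ht ht
  simp only [C, intervalIntegral.integral_same, neg_zero, exp_zero, mul_one] at h
  exact pos_of_mul_pos_left (ha.trans_le h) (exp_pos _).le

/-- The solution of `N' = r N (1 - N / κ)` with `N 0 = N₀`. -/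
noncomputable def logisticBound (r κ N₀ t : ℝ) : ℝ :=
  1 / ((1 / κ) * (1 - exp (-r * t)) + (1 / N₀) * exp (-r * t))

section Logistic

variable {r κ N₀ t : ℝ}

theorem exp_neg_mul_mem_Ioc (hr : 0 ≤ r) (ht : 0 ≤ t) : exp (-r * t) ∈ Ioc 0 1 :=
  ⟨exp_pos _, exp_le_one_iff.2 (by nlinarith)⟩

theorem logisticBound_le_max (hr : 0 ≤ r) (hκ : 0 < κ) (hN₀ : 0 < N₀) (ht : 0 ≤ t) :
    logisticBound r κ N₀ t ≤ max κ N₀ := by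
  obtain ⟨he0, he1⟩ := exp_neg_mul_mem_Ioc hr ht
  have hM : 0 < max κ N₀ := lt_max_of_lt_left hκ
  have hκM : 1 / max κ N₀ ≤ 1 / κ := one_div_le_one_div_of_le hκ (le_max_left _ _)
  have hN₀M : 1 / max κ N₀ ≤ 1 / N₀ := one_div_le_one_div_of_le hN₀ (le_max_right _ _)
  calc logisticBound r κ N₀ t ≤ 1 / (1 / max κ N₀) :=
        one_div_le_one_div_of_le (by positivity) (by nlinarith)
    _ = max κ N₀ := one_div_one_div _

theorem tendsto_logisticBound (hr : 0 < r) (hκ : κ ≠ 0) :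
    Tendsto (logisticBound r κ N₀) atTop (𝓝 κ) := by
  have he : Tendsto (fun t => exp (-r * t)) atTop (𝓝 0) :=
    tendsto_exp_atBot.comp (tendsto_id.const_mul_atTop_of_neg (neg_lt_zero.2 hr))
  have h : Tendsto (fun t => 1 / κ * (1 - exp (-r * t)) + 1 / N₀ * exp (-r * t)) atTop
      (𝓝 (1 / κ)) := by
    simpa using ((tendsto_const_nhds (x := (1 : ℝ)).sub he).const_mul (1 / κ)).add
      (he.const_mul (1 / N₀))
  have h' := (tendsto_const_nhds (x := (1 : ℝ))).div h (one_div_ne_zero hκ)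
  rw [one_div_one_div] at h'
  exact h'

/-- Comparison with the logistic equation: `(1/N)' ≥ r (1/κ - 1/N)`, so `e^{rt} (1/N - 1/κ)` grows. -/
theorem le_logisticBound {N N' : ℝ → ℝ} (hr : 0 ≤ r) (hκ : 0 < κ)
    (hN : ∀ t ∈ Ici 0, HasDerivAt N (N' t) t) (hpos : ∀ t ∈ Ici 0, 0 < N t)
    (hN' : ∀ t ∈ Ici 0, N' t ≤ r * N t * (1 - N t / κ)) (ht : 0 ≤ t) :
    N t ≤ logisticBound r κ (N 0) t := by
  have hmono : MonotoneOn (fun t => exp (r * t) * ((N t)⁻¹ - κ⁻¹)) (Ici 0) := by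
    refine monotoneOn_Ici_of_hasDerivAt_nonneg (fun t ht =>
      (((hasDerivAt_id t).const_mul r).exp).mul (((hN t ht).inv (hpos t ht).ne').sub_const _))
      (fun t ht => ?_)
    have hNt := hpos t ht
    have hN't : N' t / N t ^ 2 ≤ r * ((N t)⁻¹ - κ⁻¹) := by
      calc N' t / N t ^ 2 ≤ r * N t * (1 - N t / κ) / N t ^ 2 := by gcongr; exact hN' t ht
        _ = r * ((N t)⁻¹ - κ⁻¹) := by field_simp
    have := exp_pos (r * t)
    show 0 ≤ exp (r * t) * (r * 1) * ((N t)⁻¹ - κ⁻¹) + exp (r * t) * (-N' t / N t ^ 2)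
    rw [neg_div]
    nlinarith
  have h := hmono self_mem_Ici ht ht
  simp only [mul_zero, exp_zero, one_mul] at h
  obtain ⟨he0, he1⟩ := exp_neg_mul_mem_Ioc hr ht
  have hinv : 1 / κ * (1 - exp (-r * t)) + 1 / N 0 * exp (-r * t) ≤ (N t)⁻¹ := by
    have hcancel : exp (-r * t) * exp (r * t) = 1 := by rw [← exp_add]; simp
    have := mul_le_mul_of_nonneg_left h he0.le
    rw [← mul_assoc, hcancel, one_mul] at this
    simp only [one_div]
    linarith
  have hN0 := hpos 0 self_mem_Ici
  have hdenom : 0 < 1 / κ * (1 - exp (-r * t)) + 1 / N 0 * exp (-r * t) := by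
    have : 0 ≤ 1 / κ * (1 - exp (-r * t)) := mul_nonneg (by positivity) (by linarith)
    positivity
  calc N t = 1 / (N t)⁻¹ := by rw [one_div, inv_inv]
    _ ≤ _ := one_div_le_one_div_of_le hdenom hinv

end Logistic

theorem limsup_le_of_eventuallyLE_of_tendsto {α : Type*} {f : Filter α} [f.NeBot]
    {u v : α → ℝ} {c l : ℝ} (hu : ∀ᶠ x in f, c ≤ u x) (huv : u ≤ᶠ[f] v)
    (hv : Tendsto v f (𝓝 l)) : limsup u f ≤ l :=
  (limsup_le_limsup huv (isCoboundedUnder_le_of_eventually_le f hu) hv.isBoundedUnder_le).trans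
    hv.limsup_eq.le

section LogisticWithMortality

variable {N m : ℝ → ℝ} {b K μ M : ℝ}

theorem pos_of_hasDerivAt_logistic_sub
    (hN : ∀ t ∈ Ici 0, HasDerivAt N (b * (1 - N t / K) * N t - m t) t)
    (hm : ∀ t ∈ Ici 0, m t ≤ M * N t) (hN₀ : 0 < N 0) : ∀ t ∈ Ici 0, 0 < N t := by
  have hNc : ContinuousOn N (Ici 0) := fun t ht => (hN t ht).continuousAt.continuousWithinAt
  refine pos_of_mul_le_hasDerivAt (c := fun t => b * (1 - N t / K) - M) (by fun_prop) hN
    (fun t ht => ?_) hN₀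
  have := hm t ht
  linarith

theorem le_logisticBound_of_hasDerivAt_logistic_sub (hb : 0 < b) (hK : 0 < K) (hμb : μ < b)
    (hN : ∀ t ∈ Ici 0, HasDerivAt N (b * (1 - N t / K) * N t - m t) t)
    (hpos : ∀ t ∈ Ici 0, 0 < N t) (hm : ∀ t ∈ Ici 0, μ * N t ≤ m t) {t : ℝ} (ht : 0 ≤ t) :
    N t ≤ logisticBound (b - μ) (K * (b - μ) / b) (N 0) t := by
  have hr : 0 < b - μ := sub_pos.2 hμb
  refine le_logisticBound hr.le (by positivity) hN hpos (fun t ht => ?_) ht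
  have hlogistic : (b - μ) * N t * (1 - N t / (K * (b - μ) / b))
      = b * (1 - N t / K) * N t - μ * N t := by
    field_simp
    ring
  have := hm t ht
  linarith

end LogisticWithMortality

theorem stmt_1_general
    (b K α1 α2 α3 β1 β2 γ1 γ2 η1 η2 ρ1 ρ2 ρ3 μ0 μ1' μ2' μ3' μ4' : ℝ)
    (hb : 0 < b) (hK : 0 < K)
    (hbμ0 : μ0 < b)
    (hμ04 : μ0 < μ4') (hμ01 : μ0 < μ1') (hμ02 : μ0 < μ2') (hμ03 : μ0 < μ3')
    (μ1 μ2 μ3 : ℝ) (hμ1 : μ1 = ρ1 + μ1') (hμ2 : μ2 = ρ2 + μ2') (hμ3 : μ3 = ρ3 + μ3')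
    (S I1 I2 I12 R N : ℝ → ℝ)
    (hN : ∀ t, N t = S t + I1 t + I2 t + I12 t + R t)
    (hS : ∀ t ≥ (0:ℝ), HasDerivAt S
      ((b * (1 - N t / K) - α1 * I1 t - α2 * I2 t - (β1 + β2 + α3) * I12 t - μ0) * S t) t)
    (hI1 : ∀ t ≥ (0:ℝ), HasDerivAt I1
      ((b * (1 - N t / K) + α1 * S t - η1 * I12 t - γ1 * I2 t - μ1) * I1 t
        + β1 * S t * I12 t) t)
    (hI2 : ∀ t ≥ (0:ℝ), HasDerivAt I2
      ((b * (1 - N t / K) + α2 * S t - η2 * I12 t - γ2 * I1 t - μ2) * I2 t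
        + β2 * S t * I12 t) t)
    (hI12 : ∀ t ≥ (0:ℝ), HasDerivAt I12
      ((b * (1 - N t / K) + α3 * S t + η1 * I1 t + η2 * I2 t - μ3) * I12 t
        + (γ1 + γ2) * I1 t * I2 t) t)
    (hR : ∀ t ≥ (0:ℝ), HasDerivAt R
      ((b * (1 - N t / K) - μ4') * R t + ρ1 * I1 t + ρ2 * I2 t + ρ3 * I12 t) t)
    (hnonneg : ∀ t ≥ (0:ℝ), 0 ≤ S t ∧ 0 ≤ I1 t ∧ 0 ≤ I2 t ∧ 0 ≤ I12 t ∧ 0 ≤ R t)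
    (hN0 : 0 < N 0)
    (Sss : ℝ) (hSss : Sss = K * (b - μ0) / b) :
    (∀ t ≥ (0:ℝ), N t ≤ 1 / ((1 / Sss) * (1 - Real.exp (-(b - μ0) * t))
        + (1 / N 0) * Real.exp (-(b - μ0) * t)))
    ∧ (∀ t ≥ (0:ℝ), N t ≤ max Sss (N 0))
    ∧ limsup N atTop ≤ Sss := by
  set m : ℝ → ℝ := fun t => μ0 * S t + μ1' * I1 t + μ2' * I2 t + μ3' * I12 t + μ4' * R t
  set M := max (max μ1' μ2') (max μ3' μ4')
  have hN' : ∀ t ∈ Ici (0 : ℝ), HasDerivAt N (b * (1 - N t / K) * N t - m t) t := by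
    intro t ht
    refine (((((hS t ht).add (hI1 t ht)).add (hI2 t ht)).add (hI12 t ht)).add
      (hR t ht)).congr_of_eventuallyEq (.of_forall hN) |>.congr_deriv ?_
    rw [hμ1, hμ2, hμ3, hN t]
    ring
  have hm_le : ∀ t ∈ Ici (0 : ℝ), m t ≤ M * N t := by
    intro t ht
    obtain ⟨hS0, hI10, hI20, hI120, hR0⟩ := hnonneg t ht
    obtain ⟨hμ1M, hμ2M, hμ3M, hμ4M⟩ : μ1' ≤ M ∧ μ2' ≤ M ∧ μ3' ≤ M ∧ μ4' ≤ M := by simp [M]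
    nlinarith [hN t]
  have hm_ge : ∀ t ∈ Ici (0 : ℝ), μ0 * N t ≤ m t := by
    intro t ht
    obtain ⟨hS0, hI10, hI20, hI120, hR0⟩ := hnonneg t ht
    nlinarith [hN t]
  have hpos := pos_of_hasDerivAt_logistic_sub hN' hm_le hN0
  have hlog : ∀ t ≥ (0 : ℝ), N t ≤ logisticBound (b - μ0) Sss (N 0) t := fun t ht =>
    hSss ▸ le_logisticBound_of_hasDerivAt_logistic_sub hb hK hbμ0 hN' hpos hm_ge ht
  have hr : 0 < b - μ0 := sub_pos.2 hbμ0
  have hSss_pos : 0 < Sss := by rw [hSss]; positivity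
  refine ⟨hlog, fun t ht => (hlog t ht).trans (logisticBound_le_max hr.le hSss_pos hN0 ht), ?_⟩
  refine limsup_le_of_eventuallyLE_of_tendsto (c := 0) ?_ (eventually_atTop.2 ⟨0, hlog⟩)
    (tendsto_logisticBound hr hSss_pos.ne')
  refine eventually_atTop.2 ⟨0, fun t ht => ?_⟩
  obtain ⟨hS0, hI10, hI20, hI120, hR0⟩ := hnonneg t ht
  linarith [hN t]

/-- For a nonnegative solution of the coinfection model with `N 0 > 0`
and `μ₀ < μ₄'`, `μ₀ < μⱼ'` (j = 1,2,3), the total population satisfies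
`N t ≤ 1 / ((1/S**)(1 - e^{-(b-μ₀)t}) + (1/N 0) e^{-(b-μ₀)t})` for all `t ≥ 0`;
in particular `N t ≤ max S** (N 0)` and `limsup N ≤ S**`. -/
theorem stmt_1
    (b K α1 α2 α3 β1 β2 γ1 γ2 η1 η2 ρ1 ρ2 ρ3 μ0 μ1' μ2' μ3' μ4' : ℝ)
    (hb : 0 < b) (hK : 0 < K) (hα1 : 0 < α1) (hα2 : 0 < α2) (hα3 : 0 < α3)
    (hβ1 : 0 < β1) (hβ2 : 0 < β2) (hγ1 : 0 < γ1) (hγ2 : 0 < γ2)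
    (hη1 : 0 < η1) (hη2 : 0 < η2) (hρ1 : 0 < ρ1) (hρ2 : 0 < ρ2) (hρ3 : 0 < ρ3)
    (hμ0 : 0 < μ0) (hμ1' : 0 < μ1') (hμ2' : 0 < μ2') (hμ3' : 0 < μ3') (hμ4' : 0 < μ4')
    (hbμ0 : μ0 < b)
    (hμ04 : μ0 < μ4') (hμ01 : μ0 < μ1') (hμ02 : μ0 < μ2') (hμ03 : μ0 < μ3')
    (μ1 μ2 μ3 : ℝ) (hμ1 : μ1 = ρ1 + μ1') (hμ2 : μ2 = ρ2 + μ2') (hμ3 : μ3 = ρ3 + μ3')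
    (S I1 I2 I12 R N : ℝ → ℝ)
    (hN : ∀ t, N t = S t + I1 t + I2 t + I12 t + R t)
    (hS : ∀ t ≥ (0:ℝ), HasDerivAt S
      ((b * (1 - N t / K) - α1 * I1 t - α2 * I2 t - (β1 + β2 + α3) * I12 t - μ0) * S t) t)
    (hI1 : ∀ t ≥ (0:ℝ), HasDerivAt I1
      ((b * (1 - N t / K) + α1 * S t - η1 * I12 t - γ1 * I2 t - μ1) * I1 t
        + β1 * S t * I12 t) t)
    (hI2 : ∀ t ≥ (0:ℝ), HasDerivAt I2
      ((b * (1 - N t / K) + α2 * S t - η2 * I12 t - γ2 * I1 t - μ2) * I2 t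
        + β2 * S t * I12 t) t)
    (hI12 : ∀ t ≥ (0:ℝ), HasDerivAt I12
      ((b * (1 - N t / K) + α3 * S t + η1 * I1 t + η2 * I2 t - μ3) * I12 t
        + (γ1 + γ2) * I1 t * I2 t) t)
    (hR : ∀ t ≥ (0:ℝ), HasDerivAt R
      ((b * (1 - N t / K) - μ4') * R t + ρ1 * I1 t + ρ2 * I2 t + ρ3 * I12 t) t)
    (hnonneg : ∀ t ≥ (0:ℝ), 0 ≤ S t ∧ 0 ≤ I1 t ∧ 0 ≤ I2 t ∧ 0 ≤ I12 t ∧ 0 ≤ R t)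
    (hN0 : 0 < N 0)
    (Sss : ℝ) (hSss : Sss = K * (b - μ0) / b) :
    (∀ t ≥ (0:ℝ), N t ≤ 1 / ((1 / Sss) * (1 - Real.exp (-(b - μ0) * t))
        + (1 / N 0) * Real.exp (-(b - μ0) * t)))
    ∧ (∀ t ≥ (0:ℝ), N t ≤ max Sss (N 0))
    ∧ limsup N atTop ≤ Sss :=
  stmt_1_general b K α1 α2 α3 β1 β2 γ1 γ2 η1 η2 ρ1 ρ2 ρ3 μ0 μ1' μ2' μ3' μ4' hb hK hbμ0 hμ04 hμ01
    hμ02 hμ03 μ1 μ2 μ3 hμ1 hμ2 hμ3 S I1 I2 I12 R N hN hS hI1 hI2 hI12 hR hnonneg hN0 Sss hSss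
end

section
/- Let (S, I₁, I₂, I₁₂, R) be a solution of the coinfection model with all components nonnegative, N(0) > 0, b > μ₃', and suppose μ₃' is the largest death rate, i.e. μ₀ ≤ μ₃', μ₄' ≤ μ₃', μ₁' ≤ μ₃', μ₂' ≤ μ₃'. Then for all t ≥ 0, N(t) ≥ 1 / ( (b/(K(b−μ₃')))(1 − e^{−(b−μ₃')t}) + (1/N(0)) e^{−(b−μ₃')t} ). In particular N(t) ≥ min{ K(b−μ₃')/b, N(0) } for all t ≥ 0, and liminf_{t→∞} N(t) ≥ K(b−μ₃')/b. -/
/-!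
Adding the five equations, all infection terms cancel and
`N' = b N (1 - N/K) - (μ₀ S + μ₁' I₁ + μ₂' I₂ + μ₃' I₁₂ + μ₄' R)`.
As `μ₃'` is the largest death rate, the death term lies between `0` and `μ₃' N`, so `N` is
squeezed between two logistic equations,
`(b - μ₃') N - (b/K) N² ≤ N' ≤ b N - (b/K) N²`.
Once `N > 0` is known (by the same comparison applied to `N` itself),
for `v = 1/N` these become linear, `v' ≤ -(b - μ₃') (v - b/(K(b - μ₃')))` and
`v' ≥ -b (v - 1/K)`, and comparing `e^{a t} (v - e)` with its initial value yields the explicit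
bounds. The second one gives `N ≤ max K N(0)`, without which the real `liminf` would be a junk
value.
-/

open Filter Topology Real Set

theorem le_of_deriv_le_neg_mul_sub {v v' : ℝ → ℝ} {a e T : ℝ} (hT : 0 ≤ T)
    (hv : ∀ t ∈ Icc 0 T, HasDerivAt v (v' t) t) (hle : ∀ t ∈ Icc 0 T, v' t ≤ -a * (v t - e)) :
    v T ≤ e * (1 - exp (-a * T)) + v 0 * exp (-a * T) := by
  set g : ℝ → ℝ := fun t => exp (a * t) * (v t - e)
  have hg : ∀ t ∈ Icc 0 T, HasDerivAt g (exp (a * t) * (a * (v t - e) + v' t)) t := by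
    intro t ht
    have hexp : HasDerivAt (fun t => exp (a * t)) (exp (a * t) * a) t := by
      simpa using ((hasDerivAt_id t).const_mul a).exp
    exact (hexp.mul ((hv t ht).sub_const e)).congr_deriv (by ring)
  have hanti : AntitoneOn g (Icc 0 T) := by
    refine antitoneOn_of_hasDerivWithinAt_nonpos (convex_Icc 0 T)
      (fun t ht => (hg t ht).continuousAt.continuousWithinAt)
      (fun t ht => (hg t (interior_subset ht)).hasDerivWithinAt) fun t ht => ?_
    have ht := interior_subset ht
    exact mul_nonpos_of_nonneg_of_nonpos (exp_pos _).le (by linarith [hle t ht])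
  have hgT : g T ≤ v 0 - e := by simpa [g] using hanti ⟨le_rfl, hT⟩ ⟨hT, le_rfl⟩ hT
  have hvT : v T - e = exp (-a * T) * g T := by
    rw [← mul_assoc, ← exp_add, neg_mul, neg_add_cancel, exp_zero, one_mul]
  calc v T = e + exp (-a * T) * g T := by linarith
    _ ≤ e + exp (-a * T) * (v 0 - e) := by gcongr
    _ = e * (1 - exp (-a * T)) + v 0 * exp (-a * T) := by ring

theorem le_of_neg_mul_sub_le_deriv {v v' : ℝ → ℝ} {a e T : ℝ} (hT : 0 ≤ T)
    (hv : ∀ t ∈ Icc 0 T, HasDerivAt v (v' t) t) (hge : ∀ t ∈ Icc 0 T, -a * (v t - e) ≤ v' t) :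
    e * (1 - exp (-a * T)) + v 0 * exp (-a * T) ≤ v T := by
  have := le_of_deriv_le_neg_mul_sub (v := -v) (v' := -v') (a := a) (e := -e) hT
    (fun t ht => (hv t ht).neg) fun t ht => by simp only [Pi.neg_apply]; linarith [hge t ht]
  simp only [Pi.neg_apply] at this
  linarith

section Logistic

variable {N N' : ℝ → ℝ} {a c : ℝ}

theorem pos_of_logistic_le_deriv (hN : ∀ t ≥ 0, HasDerivAt N (N' t) t) (hN0 : 0 < N 0)
    (hnonneg : ∀ t ≥ 0, 0 ≤ N t) (hc : 0 ≤ c)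
    (hlow : ∀ t ≥ 0, a * N t - c * N t ^ 2 ≤ N' t) : ∀ t ≥ 0, 0 < N t := by
  intro T hT
  obtain ⟨M, hM⟩ := (isCompact_Icc.image_of_continuousOn
    fun t ht => (hN t ht.1).continuousAt.continuousWithinAt : IsCompact (N '' Icc 0 T)).bddAbove
  -- On `[0, T]` the quadratic loss is at most linear, `c N² ≤ c M N`.
  have hlin : ∀ t ∈ Icc 0 T, -(c * M - a) * (N t - 0) ≤ N' t := fun t ht => by
    have hNM : N t ≤ M := hM (mem_image_of_mem N ht)
    nlinarith [hlow t ht.1, mul_nonneg hc (mul_nonneg (hnonneg t ht.1) (sub_nonneg.2 hNM))]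
  have := le_of_neg_mul_sub_le_deriv hT (fun t ht => hN t ht.1) hlin
  nlinarith [exp_pos (-(c * M - a) * T)]

theorem inv_le_of_logistic_le_deriv (hN : ∀ t ≥ 0, HasDerivAt N (N' t) t)
    (hpos : ∀ t ≥ 0, 0 < N t) (ha : a ≠ 0)
    (hlow : ∀ t ≥ 0, a * N t - c * N t ^ 2 ≤ N' t) (T : ℝ) (hT : 0 ≤ T) :
    (N T)⁻¹ ≤ c / a * (1 - exp (-a * T)) + (N 0)⁻¹ * exp (-a * T) := by
  refine le_of_deriv_le_neg_mul_sub hT (fun t ht => (hN t ht.1).inv (hpos t ht.1).ne') ?_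
  intro t ht
  have hNt := hpos t ht.1
  calc -N' t / N t ^ 2 ≤ -(a * N t - c * N t ^ 2) / N t ^ 2 := by
        gcongr; exact hlow t ht.1
    _ = -a * ((N t)⁻¹ - c / a) := by field_simp

theorem le_inv_of_deriv_le_logistic (hN : ∀ t ≥ 0, HasDerivAt N (N' t) t)
    (hpos : ∀ t ≥ 0, 0 < N t) (ha : a ≠ 0)
    (hup : ∀ t ≥ 0, N' t ≤ a * N t - c * N t ^ 2) (T : ℝ) (hT : 0 ≤ T) :
    c / a * (1 - exp (-a * T)) + (N 0)⁻¹ * exp (-a * T) ≤ (N T)⁻¹ := by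
  refine le_of_neg_mul_sub_le_deriv hT (fun t ht => (hN t ht.1).inv (hpos t ht.1).ne') ?_
  intro t ht
  have hNt := hpos t ht.1
  calc -a * ((N t)⁻¹ - c / a) = -(a * N t - c * N t ^ 2) / N t ^ 2 := by field_simp
    _ ≤ -N' t / N t ^ 2 := by gcongr; exact hup t ht.1

end Logistic

theorem exp_neg_mul_mem_Icc {a t : ℝ} (ha : 0 ≤ a) (ht : 0 ≤ t) : exp (-a * t) ∈ Icc 0 1 :=
  ⟨(exp_pos _).le, exp_le_one_iff.2 (by nlinarith)⟩

theorem min_le_of_inv_le_convex_comb {x y z θ : ℝ} (hx : 0 < x) (hy : 0 < y) (hz : 0 < z)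
    (hθ : θ ∈ Icc 0 1) (h : z⁻¹ ≤ x⁻¹ * (1 - θ) + y⁻¹ * θ) : min x y ≤ z := by
  have hmax : z⁻¹ ≤ max x⁻¹ y⁻¹ := by
    nlinarith [le_max_left x⁻¹ y⁻¹, le_max_right x⁻¹ y⁻¹, hθ.1, hθ.2]
  rcases le_max_iff.1 hmax with hzx | hzy
  · exact (min_le_left x y).trans ((inv_le_inv₀ hz hx).1 hzx)
  · exact (min_le_right x y).trans ((inv_le_inv₀ hz hy).1 hzy)

theorem le_max_of_convex_comb_le_inv {x y z θ : ℝ} (hx : 0 < x) (hy : 0 < y) (hz : 0 < z)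
    (hθ : θ ∈ Icc 0 1) (h : x⁻¹ * (1 - θ) + y⁻¹ * θ ≤ z⁻¹) : z ≤ max x y := by
  have hmin : min x⁻¹ y⁻¹ ≤ z⁻¹ := by
    nlinarith [min_le_left x⁻¹ y⁻¹, min_le_right x⁻¹ y⁻¹, hθ.1, hθ.2]
  rcases min_le_iff.1 hmin with hxz | hyz
  · exact ((inv_le_inv₀ hx hz).1 hxz).trans (le_max_left x y)
  · exact ((inv_le_inv₀ hy hz).1 hyz).trans (le_max_right x y)

theorem tendsto_convex_comb_exp {e x a : ℝ} (ha : 0 < a) :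
    Tendsto (fun t => e * (1 - exp (-a * t)) + x * exp (-a * t)) atTop (𝓝 e) := by
  have h : Tendsto (fun t => exp (-a * t)) atTop (𝓝 0) :=
    tendsto_exp_atBot.comp (tendsto_id.const_mul_atTop_of_neg (neg_lt_zero.2 ha))
  simpa using (((tendsto_const_nhds (x := (1 : ℝ))).sub h).const_mul e).add (h.const_mul x)

theorem le_liminf_of_tendsto_of_eventually_le {α : Type*} {l : Filter α} [l.NeBot]
    {f g : α → ℝ} {L : ℝ} (hg : Tendsto g l (𝓝 L)) (hgf : ∀ᶠ t in l, g t ≤ f t)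
    (hf : IsBoundedUnder (· ≤ ·) l f) : L ≤ liminf f l :=
  hg.liminf_eq ▸ liminf_le_liminf hgf hg.isBoundedUnder_ge hf.isCoboundedUnder_ge

section Coinfection

variable {b K α1 α2 α3 β1 β2 γ1 γ2 η1 η2 ρ1 ρ2 ρ3 μ0 μ1' μ2' μ3' μ4' μ1 μ2 μ3 : ℝ}
  {S I1 I2 I12 R N : ℝ → ℝ}

theorem coinfection_hasDerivAt_total
    (hμ1 : μ1 = ρ1 + μ1') (hμ2 : μ2 = ρ2 + μ2') (hμ3 : μ3 = ρ3 + μ3')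
    (hN : ∀ t, N t = S t + I1 t + I2 t + I12 t + R t)
    (hS : ∀ t ≥ (0:ℝ), HasDerivAt S
      ((b * (1 - N t / K) - α1 * I1 t - α2 * I2 t - (β1 + β2 + α3) * I12 t - μ0) * S t) t)
    (hI1 : ∀ t ≥ (0:ℝ), HasDerivAt I1
      ((b * (1 - N t / K) + α1 * S t - η1 * I12 t - γ1 * I2 t - μ1) * I1 t
        + β1 * S t * I12 t) t)
    (hI2 : ∀ t ≥ (0:ℝ), HasDerivAt I2
      ((b * (1 - N t / K) + α2 * S t - η2 * I12 t - γ2 * I1 t - μ2) * I2 t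
        + β2 * S t * I12 t) t)
    (hI12 : ∀ t ≥ (0:ℝ), HasDerivAt I12
      ((b * (1 - N t / K) + α3 * S t + η1 * I1 t + η2 * I2 t - μ3) * I12 t
        + (γ1 + γ2) * I1 t * I2 t) t)
    (hR : ∀ t ≥ (0:ℝ), HasDerivAt R
      ((b * (1 - N t / K) - μ4') * R t + ρ1 * I1 t + ρ2 * I2 t + ρ3 * I12 t) t) :
    ∀ t ≥ (0:ℝ), HasDerivAt N (b * (1 - N t / K) * N t
      - (μ0 * S t + μ1' * I1 t + μ2' * I2 t + μ3' * I12 t + μ4' * R t)) t := by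
  intro t ht
  have hsum := ((((hS t ht).add (hI1 t ht)).add (hI2 t ht)).add (hI12 t ht)).add (hR t ht)
  refine (hsum.congr_of_eventuallyEq (Eventually.of_forall hN)).congr_deriv ?_
  rw [hN t, hμ1, hμ2, hμ3]
  ring

theorem coinfection_total_deriv_bounds
    (hμ0 : 0 < μ0) (hμ1' : 0 < μ1') (hμ2' : 0 < μ2') (hμ3' : 0 < μ3') (hμ4' : 0 < μ4')
    (hμ03 : μ0 ≤ μ3') (hμ43 : μ4' ≤ μ3') (hμ13 : μ1' ≤ μ3') (hμ23 : μ2' ≤ μ3')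
    (hN : ∀ t, N t = S t + I1 t + I2 t + I12 t + R t)
    (hnonneg : ∀ t ≥ (0:ℝ), 0 ≤ S t ∧ 0 ≤ I1 t ∧ 0 ≤ I2 t ∧ 0 ≤ I12 t ∧ 0 ≤ R t) (t : ℝ)
    (ht : 0 ≤ t) :
    (b - μ3') * N t - b / K * N t ^ 2 ≤ b * (1 - N t / K) * N t
        - (μ0 * S t + μ1' * I1 t + μ2' * I2 t + μ3' * I12 t + μ4' * R t) ∧
      b * (1 - N t / K) * N t
        - (μ0 * S t + μ1' * I1 t + μ2' * I2 t + μ3' * I12 t + μ4' * R t)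
        ≤ b * N t - b / K * N t ^ 2 := by
  obtain ⟨hSt, hI1t, hI2t, hI12t, hRt⟩ := hnonneg t ht
  have hdeaths : μ0 * S t + μ1' * I1 t + μ2' * I2 t + μ3' * I12 t + μ4' * R t ≤ μ3' * N t := by
    rw [hN t]
    nlinarith [mul_le_mul_of_nonneg_right hμ03 hSt, mul_le_mul_of_nonneg_right hμ13 hI1t,
      mul_le_mul_of_nonneg_right hμ23 hI2t, mul_le_mul_of_nonneg_right hμ43 hRt]
  have hdeaths_nonneg : 0 ≤ μ0 * S t + μ1' * I1 t + μ2' * I2 t + μ3' * I12 t + μ4' * R t := by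
    positivity
  have hlogistic : b * (1 - N t / K) * N t = b * N t - b / K * N t ^ 2 := by ring
  constructor <;> linarith

end Coinfection

theorem stmt_2_general
    (b K α1 α2 α3 β1 β2 γ1 γ2 η1 η2 ρ1 ρ2 ρ3 μ0 μ1' μ2' μ3' μ4' : ℝ)
    (hb : 0 < b) (hK : 0 < K)
    (hμ0 : 0 < μ0) (hμ1' : 0 < μ1') (hμ2' : 0 < μ2') (hμ3' : 0 < μ3') (hμ4' : 0 < μ4')
    (hbμ3 : μ3' < b)
    (hμ03 : μ0 ≤ μ3') (hμ43 : μ4' ≤ μ3') (hμ13 : μ1' ≤ μ3') (hμ23 : μ2' ≤ μ3')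
    (μ1 μ2 μ3 : ℝ) (hμ1 : μ1 = ρ1 + μ1') (hμ2 : μ2 = ρ2 + μ2') (hμ3 : μ3 = ρ3 + μ3')
    (S I1 I2 I12 R N : ℝ → ℝ)
    (hN : ∀ t, N t = S t + I1 t + I2 t + I12 t + R t)
    (hS : ∀ t ≥ (0:ℝ), HasDerivAt S
      ((b * (1 - N t / K) - α1 * I1 t - α2 * I2 t - (β1 + β2 + α3) * I12 t - μ0) * S t) t)
    (hI1 : ∀ t ≥ (0:ℝ), HasDerivAt I1
      ((b * (1 - N t / K) + α1 * S t - η1 * I12 t - γ1 * I2 t - μ1) * I1 t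
        + β1 * S t * I12 t) t)
    (hI2 : ∀ t ≥ (0:ℝ), HasDerivAt I2
      ((b * (1 - N t / K) + α2 * S t - η2 * I12 t - γ2 * I1 t - μ2) * I2 t
        + β2 * S t * I12 t) t)
    (hI12 : ∀ t ≥ (0:ℝ), HasDerivAt I12
      ((b * (1 - N t / K) + α3 * S t + η1 * I1 t + η2 * I2 t - μ3) * I12 t
        + (γ1 + γ2) * I1 t * I2 t) t)
    (hR : ∀ t ≥ (0:ℝ), HasDerivAt R
      ((b * (1 - N t / K) - μ4') * R t + ρ1 * I1 t + ρ2 * I2 t + ρ3 * I12 t) t)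
    (hnonneg : ∀ t ≥ (0:ℝ), 0 ≤ S t ∧ 0 ≤ I1 t ∧ 0 ≤ I2 t ∧ 0 ≤ I12 t ∧ 0 ≤ R t)
    (hN0 : 0 < N 0) :
    (∀ t ≥ (0:ℝ), N t ≥ 1 / ((b / (K * (b - μ3'))) * (1 - Real.exp (-(b - μ3') * t))
        + (1 / N 0) * Real.exp (-(b - μ3') * t)))
    ∧ (∀ t ≥ (0:ℝ), N t ≥ min (K * (b - μ3') / b) (N 0))
    ∧ K * (b - μ3') / b ≤ liminf N atTop := by
  have ha : 0 < b - μ3' := sub_pos.2 hbμ3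
  have hdN := coinfection_hasDerivAt_total hμ1 hμ2 hμ3 hN hS hI1 hI2 hI12 hR
  have hbounds := coinfection_total_deriv_bounds (b := b) (K := K) hμ0 hμ1' hμ2' hμ3' hμ4'
    hμ03 hμ43 hμ13 hμ23 hN hnonneg
  have hnonnegN : ∀ t ≥ (0:ℝ), 0 ≤ N t := fun t ht => by
    obtain ⟨h1, h2, h3, h4, h5⟩ := hnonneg t ht
    rw [hN t]; positivity
  have hpos := pos_of_logistic_le_deriv hdN hN0 hnonnegN (by positivity)
    fun t ht => (hbounds t ht).1
  have hinv_le : ∀ t ≥ (0:ℝ), (N t)⁻¹ ≤ b / (K * (b - μ3')) * (1 - Real.exp (-(b - μ3') * t))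
      + (N 0)⁻¹ * Real.exp (-(b - μ3') * t) := fun t ht => by
    simpa only [div_div] using
      inv_le_of_logistic_le_deriv hdN hpos ha.ne' (fun t ht => (hbounds t ht).1) t ht
  have hinv_ge : ∀ t ≥ (0:ℝ), K⁻¹ * (1 - Real.exp (-b * t)) + (N 0)⁻¹ * Real.exp (-b * t)
      ≤ (N t)⁻¹ := fun t ht => by
    have := le_inv_of_deriv_le_logistic hdN hpos hb.ne' (fun t ht => (hbounds t ht).2) t ht
    rwa [div_div_cancel_left' hb.ne'] at this
  have hlower : ∀ t ≥ (0:ℝ), N t ≥ 1 / (b / (K * (b - μ3')) * (1 - Real.exp (-(b - μ3') * t))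
      + 1 / N 0 * Real.exp (-(b - μ3') * t)) := fun t ht => by
    have hNt := hpos t ht
    have hinv := hinv_le t ht
    rw [ge_iff_le, one_div_le (by rw [one_div]; linarith [inv_pos.2 hNt]) hNt]
    simpa only [one_div] using hinv
  have hupper : ∀ t ≥ (0:ℝ), N t ≤ max K (N 0) := fun t ht =>
    le_max_of_convex_comb_le_inv hK hN0 (hpos t ht) (exp_neg_mul_mem_Icc hb.le ht) (hinv_ge t ht)
  refine ⟨hlower, fun t ht => ?_, ?_⟩
  · refine min_le_of_inv_le_convex_comb (by positivity) hN0 (hpos t ht)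
      (exp_neg_mul_mem_Icc ha.le ht) ?_
    simpa only [inv_div] using hinv_le t ht
  · refine le_liminf_of_tendsto_of_eventually_le ?_ ((eventually_ge_atTop 0).mono hlower)
      (isBoundedUnder_of_eventually_le ((eventually_ge_atTop 0).mono hupper))
    simpa only [one_div, inv_div] using (tendsto_convex_comb_exp ha (x := 1 / N 0)).inv₀
      (by positivity : b / (K * (b - μ3')) ≠ 0)

/-- For a nonnegative solution of the coinfection model with `N 0 > 0`,
`b > μ₃'` and `μ₃'` the largest death rate, the total population satisfies
`N t ≥ 1 / ((b/(K(b-μ₃')))(1 - e^{-(b-μ₃')t}) + (1/N 0) e^{-(b-μ₃')t})` for all `t ≥ 0`;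
in particular `N t ≥ min (K(b-μ₃')/b) (N 0)` and `liminf N ≥ K(b-μ₃')/b`. -/
theorem stmt_2
    (b K α1 α2 α3 β1 β2 γ1 γ2 η1 η2 ρ1 ρ2 ρ3 μ0 μ1' μ2' μ3' μ4' : ℝ)
    (hb : 0 < b) (hK : 0 < K) (hα1 : 0 < α1) (hα2 : 0 < α2) (hα3 : 0 < α3)
    (hβ1 : 0 < β1) (hβ2 : 0 < β2) (hγ1 : 0 < γ1) (hγ2 : 0 < γ2)
    (hη1 : 0 < η1) (hη2 : 0 < η2) (hρ1 : 0 < ρ1) (hρ2 : 0 < ρ2) (hρ3 : 0 < ρ3)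
    (hμ0 : 0 < μ0) (hμ1' : 0 < μ1') (hμ2' : 0 < μ2') (hμ3' : 0 < μ3') (hμ4' : 0 < μ4')
    (hbμ3 : μ3' < b)
    (hμ03 : μ0 ≤ μ3') (hμ43 : μ4' ≤ μ3') (hμ13 : μ1' ≤ μ3') (hμ23 : μ2' ≤ μ3')
    (μ1 μ2 μ3 : ℝ) (hμ1 : μ1 = ρ1 + μ1') (hμ2 : μ2 = ρ2 + μ2') (hμ3 : μ3 = ρ3 + μ3')
    (S I1 I2 I12 R N : ℝ → ℝ)
    (hN : ∀ t, N t = S t + I1 t + I2 t + I12 t + R t)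
    (hS : ∀ t ≥ (0:ℝ), HasDerivAt S
      ((b * (1 - N t / K) - α1 * I1 t - α2 * I2 t - (β1 + β2 + α3) * I12 t - μ0) * S t) t)
    (hI1 : ∀ t ≥ (0:ℝ), HasDerivAt I1
      ((b * (1 - N t / K) + α1 * S t - η1 * I12 t - γ1 * I2 t - μ1) * I1 t
        + β1 * S t * I12 t) t)
    (hI2 : ∀ t ≥ (0:ℝ), HasDerivAt I2
      ((b * (1 - N t / K) + α2 * S t - η2 * I12 t - γ2 * I1 t - μ2) * I2 t
        + β2 * S t * I12 t) t)
    (hI12 : ∀ t ≥ (0:ℝ), HasDerivAt I12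
      ((b * (1 - N t / K) + α3 * S t + η1 * I1 t + η2 * I2 t - μ3) * I12 t
        + (γ1 + γ2) * I1 t * I2 t) t)
    (hR : ∀ t ≥ (0:ℝ), HasDerivAt R
      ((b * (1 - N t / K) - μ4') * R t + ρ1 * I1 t + ρ2 * I2 t + ρ3 * I12 t) t)
    (hnonneg : ∀ t ≥ (0:ℝ), 0 ≤ S t ∧ 0 ≤ I1 t ∧ 0 ≤ I2 t ∧ 0 ≤ I12 t ∧ 0 ≤ R t)
    (hN0 : 0 < N 0) :
    (∀ t ≥ (0:ℝ), N t ≥ 1 / ((b / (K * (b - μ3'))) * (1 - Real.exp (-(b - μ3') * t))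
        + (1 / N 0) * Real.exp (-(b - μ3') * t)))
    ∧ (∀ t ≥ (0:ℝ), N t ≥ min (K * (b - μ3') / b) (N 0))
    ∧ K * (b - μ3') / b ≤ liminf N atTop :=
  stmt_2_general b K α1 α2 α3 β1 β2 γ1 γ2 η1 η2 ρ1 ρ2 ρ3 μ0 μ1' μ2' μ3' μ4' hb hK hμ0 hμ1' hμ2' hμ3'
    hμ4' hbμ3 hμ03 hμ43 hμ13 hμ23 μ1 μ2 μ3 hμ1 hμ2 hμ3 S I1 I2 I12 R N hN hS hI1 hI2 hI12 hR hnonneg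
    hN0
end

section
/- Let (S, I₁, I₂, I₁₂, R) be an equilibrium of the coinfection model with all components nonnegative, S > 0, I₁ + I₂ + I₁₂ > 0, and μ₀ < μⱼ' for j = 1,2,3,4. Then the total population N = S+I₁+I₂+I₁₂+R satisfies min{ (μ₁'−μ₀)/α₁, (μ₂'−μ₀)/α₂, (μ₃'−μ₀)/α̂₃ } ≤ N ≤ N**, where α̂₃ = β₁+β₂+α₃ and N** = K(1 − μ₀/b). -/
set_option maxHeartbeats 1000000


/-- At an equilibrium of the coinfection model with `S > 0`,
`I₁ + I₂ + I₁₂ > 0` and `μ₀ < μⱼ'` (j = 1,2,3,4), the total population satisfies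
`min ((μ₁'-μ₀)/α₁) (min ((μ₂'-μ₀)/α₂) ((μ₃'-μ₀)/α̂₃)) ≤ N ≤ N**`, where
`α̂₃ = β₁+β₂+α₃` and `N** = K(1 - μ₀/b)`. -/
theorem stmt_3
    (b K α1 α2 α3 β1 β2 γ1 γ2 η1 η2 ρ1 ρ2 ρ3 μ0 μ1' μ2' μ3' μ4' : ℝ)
    (hb : 0 < b) (hK : 0 < K) (hα1 : 0 < α1) (hα2 : 0 < α2) (hα3 : 0 < α3)
    (hβ1 : 0 < β1) (hβ2 : 0 < β2) (hγ1 : 0 < γ1) (hγ2 : 0 < γ2)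
    (hη1 : 0 < η1) (hη2 : 0 < η2) (hρ1 : 0 < ρ1) (hρ2 : 0 < ρ2) (hρ3 : 0 < ρ3)
    (hμ0 : 0 < μ0) (hμ1' : 0 < μ1') (hμ2' : 0 < μ2') (hμ3' : 0 < μ3') (hμ4' : 0 < μ4')
    (hbμ0 : μ0 < b)
    (hμ01 : μ0 < μ1') (hμ02 : μ0 < μ2') (hμ03 : μ0 < μ3') (hμ04 : μ0 < μ4')
    (μ1 μ2 μ3 : ℝ) (hμ1 : μ1 = ρ1 + μ1') (hμ2 : μ2 = ρ2 + μ2') (hμ3 : μ3 = ρ3 + μ3')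
    (S I1 I2 I12 R N : ℝ)
    (hN : N = S + I1 + I2 + I12 + R)
    (hSpos : 0 < S) (hI1n : 0 ≤ I1) (hI2n : 0 ≤ I2) (hI12n : 0 ≤ I12) (hRn : 0 ≤ R)
    (hInf : 0 < I1 + I2 + I12)
    (heq1 : (b * (1 - N / K) - α1 * I1 - α2 * I2 - (β1 + β2 + α3) * I12 - μ0) * S = 0)
    (heq2 : (b * (1 - N / K) + α1 * S - η1 * I12 - γ1 * I2 - μ1) * I1 + β1 * S * I12 = 0)
    (heq3 : (b * (1 - N / K) + α2 * S - η2 * I12 - γ2 * I1 - μ2) * I2 + β2 * S * I12 = 0)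
    (heq4 : (b * (1 - N / K) + α3 * S + η1 * I1 + η2 * I2 - μ3) * I12
        + (γ1 + γ2) * I1 * I2 = 0)
    (heq5 : (b * (1 - N / K) - μ4') * R + ρ1 * I1 + ρ2 * I2 + ρ3 * I12 = 0) :
    min ((μ1' - μ0) / α1) (min ((μ2' - μ0) / α2) ((μ3' - μ0) / (β1 + β2 + α3))) ≤ N
      ∧ N ≤ K * (1 - μ0 / b) := by
  subst hμ1 hμ2 hμ3
  -- From heq1 and S > 0:
  have hS0 : b * (1 - N / K) - α1 * I1 - α2 * I2 - (β1 + β2 + α3) * I12 - μ0 = 0 := by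
    rcases mul_eq_zero.mp heq1 with h | h
    · exact h
    · exact absurd h (ne_of_gt hSpos)
  -- Upper bound
  have hupper : N ≤ K * (1 - μ0 / b) := by
    have h1 : μ0 ≤ b * (1 - N / K) := by
      linarith [hS0, mul_nonneg hα1.le hI1n, mul_nonneg hα2.le hI2n,
        mul_nonneg (by positivity : (0:ℝ) ≤ β1 + β2 + α3) hI12n]
    have e : b * (1 - N / K) = b - b * (N / K) := by ring
    have h3 : b * (N / K) ≤ b - μ0 := by linarith
    have h4 : N / K ≤ (b - μ0) / b := by
      rw [le_div_iff₀ hb]; linarith [mul_comm (N / K) b]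
    have h5 : N ≤ ((b - μ0) / b) * K := by
      rw [← div_le_iff₀ hK]; exact h4
    have h6 : K * (1 - μ0 / b) = ((b - μ0) / b) * K := by field_simp
    linarith [h6 ▸ h5]
  refine ⟨?_, hupper⟩
  -- Sum of all five equations
  have hsum : b * (1 - N / K) * N
      = μ0 * S + (ρ1 + μ1') * I1 + (ρ2 + μ2') * I2 + (ρ3 + μ3') * I12 + μ4' * R
        - (ρ1 * I1 + ρ2 * I2 + ρ3 * I12) := by
    have := hN
    linear_combination heq1 + heq2 + heq3 + heq4 + heq5 + b * (1 - N / K) * hN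
  have hkey : (α1 * I1 + α2 * I2 + (β1 + β2 + α3) * I12) * N
      = (μ1' - μ0) * I1 + (μ2' - μ0) * I2 + (μ3' - μ0) * I12 + (μ4' - μ0) * R := by
    linear_combination hsum - N * hS0 - μ0 * hN
  by_contra hlt
  push_neg at hlt
  have h1 : N < (μ1' - μ0) / α1 := lt_of_lt_of_le hlt (min_le_left _ _)
  have h2 : N < (μ2' - μ0) / α2 :=
    lt_of_lt_of_le hlt (le_trans (min_le_right _ _) (min_le_left _ _))
  have h3 : N < (μ3' - μ0) / (β1 + β2 + α3) :=
    lt_of_lt_of_le hlt (le_trans (min_le_right _ _) (min_le_right _ _))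
  have hd1 : α1 * N < μ1' - μ0 := by
    rw [lt_div_iff₀ hα1] at h1; linarith [mul_comm α1 N]
  have hd2 : α2 * N < μ2' - μ0 := by
    rw [lt_div_iff₀ hα2] at h2; linarith [mul_comm α2 N]
  have hd3 : (β1 + β2 + α3) * N < μ3' - μ0 := by
    rw [lt_div_iff₀ (by positivity : (0:ℝ) < β1 + β2 + α3)] at h3
    linarith [mul_comm (β1 + β2 + α3) N]
  have hcase : 0 < I1 ∨ 0 < I2 ∨ 0 < I12 := by
    by_contra hc
    push_neg at hc
    obtain ⟨c1, c2, c3⟩ := hc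
    linarith
  have hR : 0 ≤ (μ4' - μ0) * R := mul_nonneg (by linarith) hRn
  clear heq1 heq2 heq3 heq4 heq5 hS0 hsum hupper h1 h2 h3
  rcases hcase with hp | hp | hp
  · nlinarith [mul_pos (by linarith : (0:ℝ) < μ1' - μ0 - α1 * N) hp,
      mul_nonneg (by linarith : (0:ℝ) ≤ μ2' - μ0 - α2 * N) hI2n,
      mul_nonneg (by linarith : (0:ℝ) ≤ μ3' - μ0 - (β1 + β2 + α3) * N) hI12n]
  · nlinarith [mul_nonneg (by linarith : (0:ℝ) ≤ μ1' - μ0 - α1 * N) hI1n,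
      mul_pos (by linarith : (0:ℝ) < μ2' - μ0 - α2 * N) hp,
      mul_nonneg (by linarith : (0:ℝ) ≤ μ3' - μ0 - (β1 + β2 + α3) * N) hI12n]
  · nlinarith [mul_nonneg (by linarith : (0:ℝ) ≤ μ1' - μ0 - α1 * N) hI1n,
      mul_nonneg (by linarith : (0:ℝ) ≤ μ2' - μ0 - α2 * N) hI2n,
      mul_pos (by linarith : (0:ℝ) < μ3' - μ0 - (β1 + β2 + α3) * N) hp]
end

section
/- Let (S, I₁, I₂, I₁₂, R) be an equilibrium of the coinfection model with all components nonnegative, S > 0, I₁ + I₂ + I₁₂ > 0, and μ₀ < μᵢ for i = 1,2,3. Then min{σ₁, σ₂, σ̂₃} ≤ N − R ≤ max{σ₁, σ₂, σ̂₃}, where σ₁ = (μ₁−μ₀)/α₁, σ₂ = (μ₂−μ₀)/α₂, σ̂₃ = (μ₃−μ₀)/α̂₃, α̂₃ = β₁+β₂+α₃, and N = S+I₁+I₂+I₁₂+R. -/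
lemma aux_le (m a c d x y z p q r : ℝ) (h1 : m * a ≤ p) (h2 : m * c ≤ q)
    (h3 : m * d ≤ r) (hx : 0 ≤ x) (hy : 0 ≤ y) (hz : 0 ≤ z) :
    m * (a * x + c * y + d * z) ≤ p * x + q * y + r * z := by
  nlinarith [mul_le_mul_of_nonneg_right h1 hx, mul_le_mul_of_nonneg_right h2 hy,
    mul_le_mul_of_nonneg_right h3 hz]

lemma aux_ge (m a c d x y z p q r : ℝ) (h1 : p ≤ m * a) (h2 : q ≤ m * c)
    (h3 : r ≤ m * d) (hx : 0 ≤ x) (hy : 0 ≤ y) (hz : 0 ≤ z) :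
    p * x + q * y + r * z ≤ m * (a * x + c * y + d * z) := by
  nlinarith [mul_le_mul_of_nonneg_right h1 hx, mul_le_mul_of_nonneg_right h2 hy,
    mul_le_mul_of_nonneg_right h3 hz]

lemma aux_pos (a c d x y z : ℝ) (ha : 0 < a) (hc : 0 < c) (hd : 0 < d)
    (hx : 0 ≤ x) (hy : 0 ≤ y) (hz : 0 ≤ z) (h : 0 < x + y + z) :
    0 < a * x + c * y + d * z := by
  rcases hx.lt_or_eq with hx'|hx'
  · nlinarith [mul_nonneg hc.le hy, mul_nonneg hd.le hz, mul_pos ha hx']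
  · rcases hy.lt_or_eq with hy'|hy'
    · nlinarith [mul_nonneg ha.le hx, mul_nonneg hd.le hz, mul_pos hc hy']
    · have hz' : 0 < z := by linarith
      nlinarith [mul_nonneg ha.le hx, mul_nonneg hc.le hy, mul_pos hd hz']


/-- At an equilibrium of the coinfection model with `S > 0`,
`I₁ + I₂ + I₁₂ > 0` and `μ₀ < μᵢ` (i = 1,2,3),
`min σ₁ (min σ₂ σ̂₃) ≤ N - R ≤ max σ₁ (max σ₂ σ̂₃)`, where `σᵢ = (μᵢ-μ₀)/αᵢ`
(with `σ̂₃ = (μ₃-μ₀)/α̂₃`, `α̂₃ = β₁+β₂+α₃`). -/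
theorem stmt_4
    (b K α1 α2 α3 β1 β2 γ1 γ2 η1 η2 ρ1 ρ2 ρ3 μ0 μ1' μ2' μ3' μ4' : ℝ)
    (hb : 0 < b) (hK : 0 < K) (hα1 : 0 < α1) (hα2 : 0 < α2) (hα3 : 0 < α3)
    (hβ1 : 0 < β1) (hβ2 : 0 < β2) (hγ1 : 0 < γ1) (hγ2 : 0 < γ2)
    (hη1 : 0 < η1) (hη2 : 0 < η2) (hρ1 : 0 < ρ1) (hρ2 : 0 < ρ2) (hρ3 : 0 < ρ3)
    (hμ0 : 0 < μ0) (hμ1' : 0 < μ1') (hμ2' : 0 < μ2') (hμ3' : 0 < μ3') (hμ4' : 0 < μ4')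
    (μ1 μ2 μ3 : ℝ) (hμ1 : μ1 = ρ1 + μ1') (hμ2 : μ2 = ρ2 + μ2') (hμ3 : μ3 = ρ3 + μ3')
    (hμ01 : μ0 < μ1) (hμ02 : μ0 < μ2) (hμ03 : μ0 < μ3)
    (S I1 I2 I12 R N : ℝ)
    (hN : N = S + I1 + I2 + I12 + R)
    (hSpos : 0 < S) (hI1n : 0 ≤ I1) (hI2n : 0 ≤ I2) (hI12n : 0 ≤ I12) (hRn : 0 ≤ R)
    (hInf : 0 < I1 + I2 + I12)
    (heq1 : (b * (1 - N / K) - α1 * I1 - α2 * I2 - (β1 + β2 + α3) * I12 - μ0) * S = 0)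
    (heq2 : (b * (1 - N / K) + α1 * S - η1 * I12 - γ1 * I2 - μ1) * I1 + β1 * S * I12 = 0)
    (heq3 : (b * (1 - N / K) + α2 * S - η2 * I12 - γ2 * I1 - μ2) * I2 + β2 * S * I12 = 0)
    (heq4 : (b * (1 - N / K) + α3 * S + η1 * I1 + η2 * I2 - μ3) * I12
        + (γ1 + γ2) * I1 * I2 = 0)
    (heq5 : (b * (1 - N / K) - μ4') * R + ρ1 * I1 + ρ2 * I2 + ρ3 * I12 = 0) :
    min ((μ1 - μ0) / α1) (min ((μ2 - μ0) / α2) ((μ3 - μ0) / (β1 + β2 + α3))) ≤ N - R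
      ∧ N - R ≤ max ((μ1 - μ0) / α1) (max ((μ2 - μ0) / α2)
          ((μ3 - μ0) / (β1 + β2 + α3))) := by
  have hS : S ≠ 0 := ne_of_gt hSpos
  have h1 : b * (1 - N / K) - α1 * I1 - α2 * I2 - (β1 + β2 + α3) * I12 - μ0 = 0 :=
    (mul_eq_zero.mp heq1).resolve_right hS
  have hα : 0 < β1 + β2 + α3 := by linarith
  have hDpos : 0 < α1 * I1 + α2 * I2 + (β1 + β2 + α3) * I12 :=
    aux_pos _ _ _ _ _ _ hα1 hα2 hα hI1n hI2n hI12n hInf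
  have key : (N - R) * (α1 * I1 + α2 * I2 + (β1 + β2 + α3) * I12)
      = (μ1 - μ0) * I1 + (μ2 - μ0) * I2 + (μ3 - μ0) * I12 := by
    linear_combination heq2 + heq3 + heq4 - (I1 + I2 + I12) * h1
      + (α1 * I1 + α2 * I2 + (β1 + β2 + α3) * I12) * hN
  constructor
  · set m := min ((μ1 - μ0) / α1) (min ((μ2 - μ0) / α2) ((μ3 - μ0) / (β1 + β2 + α3)))
      with hm
    have h1' : m * α1 ≤ μ1 - μ0 := by
      have := min_le_left ((μ1 - μ0) / α1) (min ((μ2 - μ0) / α2) ((μ3 - μ0) / (β1 + β2 + α3)))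
      rw [le_div_iff₀ hα1] at this; linarith
    have h2' : m * α2 ≤ μ2 - μ0 := by
      have : m ≤ (μ2 - μ0) / α2 := (min_le_right _ _).trans (min_le_left _ _)
      rw [le_div_iff₀ hα2] at this; linarith
    have h3' : m * (β1 + β2 + α3) ≤ μ3 - μ0 := by
      have : m ≤ (μ3 - μ0) / (β1 + β2 + α3) :=
        (min_le_right _ _).trans (min_le_right _ _)
      rw [le_div_iff₀ hα] at this; linarith
    have : m * (α1 * I1 + α2 * I2 + (β1 + β2 + α3) * I12)
        ≤ (N - R) * (α1 * I1 + α2 * I2 + (β1 + β2 + α3) * I12) := by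
      rw [key]
      exact aux_le _ _ _ _ _ _ _ _ _ _ h1' h2' h3' hI1n hI2n hI12n
    exact le_of_mul_le_mul_right this hDpos
  · set M := max ((μ1 - μ0) / α1) (max ((μ2 - μ0) / α2) ((μ3 - μ0) / (β1 + β2 + α3)))
      with hM
    have h1' : μ1 - μ0 ≤ M * α1 := by
      have : (μ1 - μ0) / α1 ≤ M := le_max_left _ _
      rw [div_le_iff₀ hα1] at this; linarith
    have h2' : μ2 - μ0 ≤ M * α2 := by
      have : (μ2 - μ0) / α2 ≤ M := (le_max_left _ _).trans (le_max_right _ _)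
      rw [div_le_iff₀ hα2] at this; linarith
    have h3' : μ3 - μ0 ≤ M * (β1 + β2 + α3) := by
      have : (μ3 - μ0) / (β1 + β2 + α3) ≤ M := (le_max_right _ _).trans (le_max_right _ _)
      rw [div_le_iff₀ hα] at this; linarith
    have : (N - R) * (α1 * I1 + α2 * I2 + (β1 + β2 + α3) * I12)
        ≤ M * (α1 * I1 + α2 * I2 + (β1 + β2 + α3) * I12) := by
      rw [key]
      exact aux_ge _ _ _ _ _ _ _ _ _ _ h1' h2' h3' hI1n hI2n hI12n
    exact le_of_mul_le_mul_right this hDpos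
end

section
/- Let (S, I₁, I₂, I₁₂, R) be an equilibrium of the coinfection model with all components nonnegative. If R = 0, then I₁ = I₂ = I₁₂ = 0; hence the only equilibria with R = 0 are of the form (S, 0, 0, 0, 0). -/
/-- At a nonnegative equilibrium of the coinfection model, if `R = 0`
then `I₁ = I₂ = I₁₂ = 0`; hence the only equilibria with `R = 0` have the form
`(S, 0, 0, 0, 0)`. -/
theorem stmt_7
    (b K α1 α2 α3 β1 β2 γ1 γ2 η1 η2 ρ1 ρ2 ρ3 μ0 μ1' μ2' μ3' μ4' : ℝ)
    (hb : 0 < b) (hK : 0 < K) (hα1 : 0 < α1) (hα2 : 0 < α2) (hα3 : 0 < α3)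
    (hβ1 : 0 < β1) (hβ2 : 0 < β2) (hγ1 : 0 < γ1) (hγ2 : 0 < γ2)
    (hη1 : 0 < η1) (hη2 : 0 < η2) (hρ1 : 0 < ρ1) (hρ2 : 0 < ρ2) (hρ3 : 0 < ρ3)
    (hμ0 : 0 < μ0) (hμ1' : 0 < μ1') (hμ2' : 0 < μ2') (hμ3' : 0 < μ3') (hμ4' : 0 < μ4')
    (μ1 μ2 μ3 : ℝ) (hμ1 : μ1 = ρ1 + μ1') (hμ2 : μ2 = ρ2 + μ2') (hμ3 : μ3 = ρ3 + μ3')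
    (S I1 I2 I12 R N : ℝ)
    (hN : N = S + I1 + I2 + I12 + R)
    (hSn : 0 ≤ S) (hI1n : 0 ≤ I1) (hI2n : 0 ≤ I2) (hI12n : 0 ≤ I12) (hRn : 0 ≤ R)
    (heq1 : (b * (1 - N / K) - α1 * I1 - α2 * I2 - (β1 + β2 + α3) * I12 - μ0) * S = 0)
    (heq2 : (b * (1 - N / K) + α1 * S - η1 * I12 - γ1 * I2 - μ1) * I1 + β1 * S * I12 = 0)
    (heq3 : (b * (1 - N / K) + α2 * S - η2 * I12 - γ2 * I1 - μ2) * I2 + β2 * S * I12 = 0)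
    (heq4 : (b * (1 - N / K) + α3 * S + η1 * I1 + η2 * I2 - μ3) * I12
        + (γ1 + γ2) * I1 * I2 = 0)
    (heq5 : (b * (1 - N / K) - μ4') * R + ρ1 * I1 + ρ2 * I2 + ρ3 * I12 = 0)
    (hR : R = 0) :
    I1 = 0 ∧ I2 = 0 ∧ I12 = 0 := by
  subst hR
  simp only [mul_zero, zero_add] at heq5
  have h1 : 0 ≤ ρ1 * I1 := mul_nonneg hρ1.le hI1n
  have h2 : 0 ≤ ρ2 * I2 := mul_nonneg hρ2.le hI2n
  have h3 : 0 ≤ ρ3 * I12 := mul_nonneg hρ3.le hI12n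
  refine ⟨?_, ?_, ?_⟩
  · rcases mul_eq_zero.mp (le_antisymm (by linarith) h1) with h | h
    · exact absurd h hρ1.ne'
    · exact h
  · rcases mul_eq_zero.mp (le_antisymm (by linarith) h2) with h | h
    · exact absurd h hρ2.ne'
    · exact h
  · rcases mul_eq_zero.mp (le_antisymm (by linarith) h3) with h | h
    · exact absurd h hρ3.ne'
    · exact h
end

section
/- Assume μ₄' < μ₁'. Then the coinfection model has no equilibrium of the form g₂ = (0, I₁*, 0, 0, R*) with I₁* > 0 and R* > 0; that is, there are no reals I₁ > 0 and R > 0 such that (0, I₁, 0, 0, R) is an equilibrium. -/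
/-- If `μ₄' < μ₁'`, the coinfection model has no equilibrium of the form
`(0, I₁, 0, 0, R)` with `I₁ > 0` and `R > 0`. -/
theorem stmt_8
    (b K α1 α2 α3 β1 β2 γ1 γ2 η1 η2 ρ1 ρ2 ρ3 μ0 μ1' μ2' μ3' μ4' : ℝ)
    (hb : 0 < b) (hK : 0 < K) (hα1 : 0 < α1) (hα2 : 0 < α2) (hα3 : 0 < α3)
    (hβ1 : 0 < β1) (hβ2 : 0 < β2) (hγ1 : 0 < γ1) (hγ2 : 0 < γ2)
    (hη1 : 0 < η1) (hη2 : 0 < η2) (hρ1 : 0 < ρ1) (hρ2 : 0 < ρ2) (hρ3 : 0 < ρ3)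
    (hμ0 : 0 < μ0) (hμ1' : 0 < μ1') (hμ2' : 0 < μ2') (hμ3' : 0 < μ3') (hμ4' : 0 < μ4')
    (μ1 μ2 μ3 : ℝ) (hμ1 : μ1 = ρ1 + μ1') (hμ2 : μ2 = ρ2 + μ2') (hμ3 : μ3 = ρ3 + μ3')
    (hμ41 : μ4' < μ1') :
    ¬ ∃ I1 R : ℝ, 0 < I1 ∧ 0 < R ∧
      (let S : ℝ := 0; let I2 : ℝ := 0; let I12 : ℝ := 0;
       let N : ℝ := S + I1 + I2 + I12 + R;
       (b * (1 - N / K) - α1 * I1 - α2 * I2 - (β1 + β2 + α3) * I12 - μ0) * S = 0 ∧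
       (b * (1 - N / K) + α1 * S - η1 * I12 - γ1 * I2 - μ1) * I1 + β1 * S * I12 = 0 ∧
       (b * (1 - N / K) + α2 * S - η2 * I12 - γ2 * I1 - μ2) * I2 + β2 * S * I12 = 0 ∧
       (b * (1 - N / K) + α3 * S + η1 * I1 + η2 * I2 - μ3) * I12
         + (γ1 + γ2) * I1 * I2 = 0 ∧
       (b * (1 - N / K) - μ4') * R + ρ1 * I1 + ρ2 * I2 + ρ3 * I12 = 0) := by
  rintro ⟨I1, R, hI1, hR, -, h2, -, -, h5⟩
  simp only [mul_zero, zero_mul, add_zero, sub_zero, zero_add, mul_comm] at h2 h5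
  have hb2 : b * (1 - (I1 + R) / K) = μ1 := by
    rcases mul_eq_zero.mp h2 with h | h
    · exact absurd h hI1.ne'
    · linarith
  rw [hb2] at h5
  nlinarith [mul_pos hR hI1]
end

section
/- Assume μ₄' < μ₁'. Then the coinfection model has no equilibrium of the form (0, I₁*, 0, I₁₂*, R*) with I₁* > 0, I₁₂* > 0 and R* > 0; that is, there are no reals I₁ > 0, I₁₂ > 0, R > 0 such that (0, I₁, 0, I₁₂, R) is an equilibrium. (The equilibrium equations would force μ₁ < b(1−N/K) < μ₄', contradicting μ₄' < μ₁' < μ₁.) -/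
/-- If `μ₄' < μ₁'`, the coinfection model has no equilibrium of the form
`(0, I₁, 0, I₁₂, R)` with `I₁ > 0`, `I₁₂ > 0` and `R > 0`. -/
theorem stmt_9
    (b K α1 α2 α3 β1 β2 γ1 γ2 η1 η2 ρ1 ρ2 ρ3 μ0 μ1' μ2' μ3' μ4' : ℝ)
    (hb : 0 < b) (hK : 0 < K) (hα1 : 0 < α1) (hα2 : 0 < α2) (hα3 : 0 < α3)
    (hβ1 : 0 < β1) (hβ2 : 0 < β2) (hγ1 : 0 < γ1) (hγ2 : 0 < γ2)
    (hη1 : 0 < η1) (hη2 : 0 < η2) (hρ1 : 0 < ρ1) (hρ2 : 0 < ρ2) (hρ3 : 0 < ρ3)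
    (hμ0 : 0 < μ0) (hμ1' : 0 < μ1') (hμ2' : 0 < μ2') (hμ3' : 0 < μ3') (hμ4' : 0 < μ4')
    (μ1 μ2 μ3 : ℝ) (hμ1 : μ1 = ρ1 + μ1') (hμ2 : μ2 = ρ2 + μ2') (hμ3 : μ3 = ρ3 + μ3')
    (hμ41 : μ4' < μ1') :
    ¬ ∃ I1 I12 R : ℝ, 0 < I1 ∧ 0 < I12 ∧ 0 < R ∧
      (let S : ℝ := 0; let I2 : ℝ := 0;
       let N : ℝ := S + I1 + I2 + I12 + R;
       (b * (1 - N / K) - α1 * I1 - α2 * I2 - (β1 + β2 + α3) * I12 - μ0) * S = 0 ∧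
       (b * (1 - N / K) + α1 * S - η1 * I12 - γ1 * I2 - μ1) * I1 + β1 * S * I12 = 0 ∧
       (b * (1 - N / K) + α2 * S - η2 * I12 - γ2 * I1 - μ2) * I2 + β2 * S * I12 = 0 ∧
       (b * (1 - N / K) + α3 * S + η1 * I1 + η2 * I2 - μ3) * I12
         + (γ1 + γ2) * I1 * I2 = 0 ∧
       (b * (1 - N / K) - μ4') * R + ρ1 * I1 + ρ2 * I2 + ρ3 * I12 = 0) := by
  rintro ⟨I1, I12, R, h1, h12, hR, -, e2, -, -, e5⟩
  simp only [mul_zero, zero_mul, add_zero, zero_add, mul_comm] at e2 e5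
  set L := b * (1 - (I1 + I12 + R) / K) with hL
  have hLval : L = η1 * I12 + μ1 := by
    have := mul_eq_zero.mp e2
    rcases this with h | h
    · linarith
    · linarith
  nlinarith [mul_pos h12 hη1, mul_pos h1 hρ1, mul_pos h12 hρ3,
    mul_pos (show (0:ℝ) < L - μ4' by nlinarith [mul_pos h12 hη1]) hR]
end

section
/- Assume μ₄' < μ₁'. Then the coinfection model has no equilibrium of the form g₆ = (0, I₁*, I₂*, I₁₂*, R*) with I₁* > 0, I₂* > 0, I₁₂* > 0 and R* > 0; that is, there are no reals I₁ > 0, I₂ > 0, I₁₂ > 0, R > 0 such that (0, I₁, I₂, I₁₂, R) is an equilibrium. -/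
/-- If `μ₄' < μ₁'`, the coinfection model has no equilibrium of the form
`(0, I₁, I₂, I₁₂, R)` with `I₁ > 0`, `I₂ > 0`, `I₁₂ > 0` and `R > 0`. -/
theorem stmt_10
    (b K α1 α2 α3 β1 β2 γ1 γ2 η1 η2 ρ1 ρ2 ρ3 μ0 μ1' μ2' μ3' μ4' : ℝ)
    (hb : 0 < b) (hK : 0 < K) (hα1 : 0 < α1) (hα2 : 0 < α2) (hα3 : 0 < α3)
    (hβ1 : 0 < β1) (hβ2 : 0 < β2) (hγ1 : 0 < γ1) (hγ2 : 0 < γ2)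
    (hη1 : 0 < η1) (hη2 : 0 < η2) (hρ1 : 0 < ρ1) (hρ2 : 0 < ρ2) (hρ3 : 0 < ρ3)
    (hμ0 : 0 < μ0) (hμ1' : 0 < μ1') (hμ2' : 0 < μ2') (hμ3' : 0 < μ3') (hμ4' : 0 < μ4')
    (μ1 μ2 μ3 : ℝ) (hμ1 : μ1 = ρ1 + μ1') (hμ2 : μ2 = ρ2 + μ2') (hμ3 : μ3 = ρ3 + μ3')
    (hμ41 : μ4' < μ1') :
    ¬ ∃ I1 I2 I12 R : ℝ, 0 < I1 ∧ 0 < I2 ∧ 0 < I12 ∧ 0 < R ∧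
      (let S : ℝ := 0;
       let N : ℝ := S + I1 + I2 + I12 + R;
       (b * (1 - N / K) - α1 * I1 - α2 * I2 - (β1 + β2 + α3) * I12 - μ0) * S = 0 ∧
       (b * (1 - N / K) + α1 * S - η1 * I12 - γ1 * I2 - μ1) * I1 + β1 * S * I12 = 0 ∧
       (b * (1 - N / K) + α2 * S - η2 * I12 - γ2 * I1 - μ2) * I2 + β2 * S * I12 = 0 ∧
       (b * (1 - N / K) + α3 * S + η1 * I1 + η2 * I2 - μ3) * I12
         + (γ1 + γ2) * I1 * I2 = 0 ∧
       (b * (1 - N / K) - μ4') * R + ρ1 * I1 + ρ2 * I2 + ρ3 * I12 = 0) := by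
  rintro ⟨I1, I2, I12, R, hI1, hI2, hI12, hR, h⟩
  simp only at h
  obtain ⟨h1, h2, h3, h4, h5⟩ := h
  nlinarith [mul_pos hη1 hI12, mul_pos hγ1 hI2, mul_pos hρ1 hI1, mul_pos hρ2 hI2,
    mul_pos hρ3 hI12, mul_pos (mul_pos hη1 hI12) hR, mul_pos (mul_pos hγ1 hI2) hR,
    mul_pos hR hI1, mul_pos hρ1 hI1]
end

section
/- Let J be the 5×5 real matrix (the Jacobian of the coinfection model at the disease-free equilibrium G₂ = (S**, 0, 0, 0, 0)) with rows: row 1 = (−(b−μ₀), −(α₁+b/K)S**, −(α₂+b/K)S**, −(α̂₃+b/K)S**, −(b−μ₀)); row 2 = (0, α₁(S**−σ₁), 0, β₁S**, 0); row 3 = (0, 0, α₂(S**−σ₂), β₂S**, 0); row 4 = (0, 0, 0, α₃(S**−σ₃), 0); row 5 = (0, ρ₁, ρ₂, ρ₃, μ₀−μ₄'). If b > μ₀, μ₀ < μ₄', σ₁ < σ₂ < σ₃, and S** < σ₁ (equivalently K < K* = bσ₁/(b−μ₀)), then every complex eigenvalue of J has negative real part. -/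
open Polynomial

set_option maxHeartbeats 1000000 in
lemma charpoly_aux (a b c d e p q r s t u v w y : ℝ) :
    (!![a, p, q, r, s;
        0, b, 0, t, 0;
        0, 0, c, u, 0;
        0, 0, 0, d, 0;
        0, v, w, y, e] : Matrix (Fin 5) (Fin 5) ℝ).charpoly
      = (X - C a) * ((X - C b) * ((X - C c) * ((X - C d) * (X - C e)))) := by
  have h1 : (!![a, p, q, r, s;
        0, b, 0, t, 0;
        0, 0, c, u, 0;
        0, 0, 0, d, 0;
        0, v, w, y, e] : Matrix (Fin 5) (Fin 5) ℝ).charmatrix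
      = !![X - C a, -C p, -C q, -C r, -C s;
           0, X - C b, 0, -C t, 0;
           0, 0, X - C c, -C u, 0;
           0, 0, 0, X - C d, 0;
           0, -C v, -C w, -C y, X - C e] := by
    ext i j
    fin_cases i <;> fin_cases j <;>
      simp [Matrix.charmatrix_apply, Matrix.diagonal, Matrix.vecHead, Matrix.vecTail]
  rw [Matrix.charpoly, h1]
  simp [Matrix.det_succ_row_zero, Fin.sum_univ_succ, Fin.succAbove]

/-- The Jacobian of the coinfection model at the disease-free
equilibrium `G₂ = (S**, 0, 0, 0, 0)` has all its complex eigenvalues (roots of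
its characteristic polynomial over `ℂ`) with negative real part whenever
`b > μ₀`, `μ₀ < μ₄'`, `σ₁ < σ₂ < σ₃` and `S** < σ₁`
(equivalently `K < K* = bσ₁/(b-μ₀)`). -/
theorem stmt_11
    (b K α1 α2 α3 β1 β2 ρ1 ρ2 ρ3 μ0 μ1' μ2' μ3' μ4' : ℝ)
    (hb : 0 < b) (hK : 0 < K) (hα1 : 0 < α1) (hα2 : 0 < α2) (hα3 : 0 < α3)
    (hβ1 : 0 < β1) (hβ2 : 0 < β2) (hρ1 : 0 < ρ1) (hρ2 : 0 < ρ2) (hρ3 : 0 < ρ3)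
    (hμ0 : 0 < μ0) (hμ1' : 0 < μ1') (hμ2' : 0 < μ2') (hμ3' : 0 < μ3') (hμ4' : 0 < μ4')
    (hbμ0 : μ0 < b) (hμ04 : μ0 < μ4')
    (μ1 μ2 μ3 : ℝ) (hμ1 : μ1 = ρ1 + μ1') (hμ2 : μ2 = ρ2 + μ2') (hμ3 : μ3 = ρ3 + μ3')
    (σ1 σ2 σ3 : ℝ)
    (hσ1 : σ1 = (μ1 - μ0) / α1) (hσ2 : σ2 = (μ2 - μ0) / α2) (hσ3 : σ3 = (μ3 - μ0) / α3)
    (hσ12 : σ1 < σ2) (hσ23 : σ2 < σ3)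
    (Sss : ℝ) (hSss : Sss = K * (b - μ0) / b)
    (hstab : Sss < σ1)
    (J : Matrix (Fin 5) (Fin 5) ℝ)
    (hJ : J = !![-(b - μ0), -(α1 + b / K) * Sss, -(α2 + b / K) * Sss,
                   -((β1 + β2 + α3) + b / K) * Sss, -(b - μ0);
                 0, α1 * (Sss - σ1), 0, β1 * Sss, 0;
                 0, 0, α2 * (Sss - σ2), β2 * Sss, 0;
                 0, 0, 0, α3 * (Sss - σ3), 0;
                 0, ρ1, ρ2, ρ3, μ0 - μ4']) :
    ∀ z : ℂ, (J.charpoly.map (algebraMap ℝ ℂ)).IsRoot z → z.re < 0 := by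
  intro z hz
  have hcp : J.charpoly
      = (X - C (-(b - μ0))) * ((X - C (α1 * (Sss - σ1))) * ((X - C (α2 * (Sss - σ2))) *
        ((X - C (α3 * (Sss - σ3))) * (X - C (μ0 - μ4'))))) := by
    rw [hJ]; exact charpoly_aux _ _ _ _ _ _ _ _ _ _ _ _ _ _
  rw [hcp] at hz
  simp only [Polynomial.IsRoot, Polynomial.map_mul, Polynomial.map_sub, Polynomial.map_X,
    Polynomial.map_C, Polynomial.eval_mul, Polynomial.eval_sub, Polynomial.eval_X,
    Polynomial.eval_C, mul_eq_zero, sub_eq_zero] at hz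
  have e1 : -(b - μ0) < 0 := by linarith
  have e2 : α1 * (Sss - σ1) < 0 := mul_neg_of_pos_of_neg hα1 (by linarith)
  have e3 : α2 * (Sss - σ2) < 0 := mul_neg_of_pos_of_neg hα2 (by linarith)
  have e4 : α3 * (Sss - σ3) < 0 := mul_neg_of_pos_of_neg hα3 (by linarith)
  have e5 : μ0 - μ4' < 0 := by linarith
  rcases hz with h | h | h | h | h <;>
    · rw [h]
      simpa using by assumption
end

section
/- Fix K > 0 and define f(R) = ((Ŝ₁ − R) + (K/b)(μ₀ − μ₄'))R + (ρ₁/α₁)(Ŝ₁ − R), where Ŝ₁ = S** − σ₁. If b > μ₀, μ₀ < μ₄', α₁ > 0, ρ₁ > 0, and Ŝ₁ > 0 (equivalently S** > σ₁), then f has exactly one root R in the open interval (0, Ŝ₁). -/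
/-- For fixed `K > 0`, the function
`f(R) = ((Ŝ₁ - R) + (K/b)(μ₀ - μ₄'))R + (ρ₁/α₁)(Ŝ₁ - R)` with `Ŝ₁ = S** - σ₁ > 0`
has exactly one root in the open interval `(0, Ŝ₁)`, provided `b > μ₀`, `μ₀ < μ₄'`,
`α₁ > 0` and `ρ₁ > 0`. -/
theorem stmt_12
    (b K α1 ρ1 μ0 μ1' μ4' : ℝ)
    (hb : 0 < b) (hK : 0 < K) (hα1 : 0 < α1) (hρ1 : 0 < ρ1)
    (hμ0 : 0 < μ0) (hμ1' : 0 < μ1') (hμ4' : 0 < μ4')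
    (hbμ0 : μ0 < b) (hμ04 : μ0 < μ4')
    (μ1 σ1 Sss Shat1 : ℝ)
    (hμ1 : μ1 = ρ1 + μ1') (hσ1 : σ1 = (μ1 - μ0) / α1)
    (hSss : Sss = K * (b - μ0) / b)
    (hShat1 : Shat1 = Sss - σ1) (hShat1pos : 0 < Shat1)
    (f : ℝ → ℝ)
    (hf : ∀ r, f r = ((Shat1 - r) + (K / b) * (μ0 - μ4')) * r
        + (ρ1 / α1) * (Shat1 - r)) :
    ∃! r, r ∈ Set.Ioo 0 Shat1 ∧ f r = 0 := by
  have hq : 0 < ρ1 / α1 := div_pos hρ1 hα1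
  have hcneg : (K / b) * (μ0 - μ4') < 0 :=
    mul_neg_of_pos_of_neg (div_pos hK hb) (by linarith)
  have hf0 : 0 < f 0 := by
    rw [hf]
    have := mul_pos hq hShat1pos
    nlinarith
  have hfS : f Shat1 < 0 := by
    rw [hf]
    have := mul_neg_of_neg_of_pos hcneg hShat1pos
    nlinarith
  have hcont : Continuous f := by
    have : f = fun r => ((Shat1 - r) + (K / b) * (μ0 - μ4')) * r
        + (ρ1 / α1) * (Shat1 - r) := funext hf
    rw [this]; continuity
  have key : ∀ x y, x ∈ Set.Ioo 0 Shat1 → f x = 0 → y ∈ Set.Ioo 0 Shat1 → f y = 0 → x = y := by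
    intro x y hx hfx hy hfy
    rw [hf] at hfx hfy
    by_contra hne
    have h1 : (x - y) * ((Shat1 + (K / b) * (μ0 - μ4') - ρ1 / α1) - (x + y)) = 0 := by
      linear_combination hfx - hfy
    have h2 : (Shat1 + (K / b) * (μ0 - μ4') - ρ1 / α1) - (x + y) = 0 := by
      rcases mul_eq_zero.mp h1 with h | h
      · exact absurd (sub_eq_zero.mp h) hne
      · exact h
    have h3 : x * y + (ρ1 / α1) * Shat1 = 0 := by linear_combination hfx - x * h2
    nlinarith [mul_pos hx.1 hy.1, mul_pos hq hShat1pos]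
  obtain ⟨r, hr, hfr⟩ := intermediate_value_Ioo' (le_of_lt hShat1pos)
    hcont.continuousOn ⟨hfS, hf0⟩
  exact ⟨r, ⟨hr, hfr⟩, fun y hy => key y r hy.1 hy.2 hr hfr⟩
end

section
/- (Proposition 4.) Let R : (K*, ∞) → ℝ be a differentiable function of the carrying capacity K such that for every K > K*: 0 < R(K) < Ŝ₁(K) and f(R(K), K) = 0, where Ŝ₁(K) = K(b−μ₀)/b − σ₁ and f(R, K) = ((Ŝ₁(K) − R) + (K/b)(μ₀ − μ₄'))R + (ρ₁/α₁)(Ŝ₁(K) − R). Then for every K > K*, 0 < K·R'(K) < σ₁ + R(K). -/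
/-!
Write `q = ρ₁/α₁` and `K d = (K/b)(μ₀ - μ₄')`. Differentiating `f(R(K), K) = 0` and eliminating
the term `K d R` with `f = 0` itself gives
`K R' · ((R + q) + (R - Ŝ₁ - K d)) = (R + q)(σ₁ + R)`. Since `f = 0` and `0 < R < Ŝ₁` force
`R - Ŝ₁ - K d > 0`, the factor multiplying `K R'` exceeds `R + q > 0`, so `0 < K R' < σ₁ + R`.
-/

open Filter Topology

/-- The equilibrium equation `f(R, K)` of the paper, with `Ŝ₁(K) = K c - σ`, `K d = (K/b)(μ₀ - μ₄')`
and `q = ρ₁/α₁`. -/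
def equilibriumResidual (c d σ q R K : ℝ) : ℝ :=
  (K * c - σ - R + K * d) * R + q * (K * c - σ - R)

theorem equilibriumResidual_deriv_eq_zero {c d σ q r' K : ℝ} {R : ℝ → ℝ}
    (hR : HasDerivAt R r' K)
    (hf : ∀ᶠ k in 𝓝 K, equilibriumResidual c d σ q (R k) k = 0) :
    (c - r' + d) * R K + (K * c - σ - R K + K * d) * r' + q * (c - r') = 0 := by
  have hS : HasDerivAt (fun k => k * c - σ - R k) (c - r') K :=
    ((((hasDerivAt_id' K).mul_const c).sub_const σ).sub hR).congr_deriv (by ring)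
  have hf' : HasDerivAt (fun k => equilibriumResidual c d σ q (R k) k)
      ((c - r' + d) * R K + (K * c - σ - R K + K * d) * r' + q * (c - r')) K :=
    (((hS.add ((hasDerivAt_id' K).mul_const d)).mul hR).add (hS.const_mul q)).congr_deriv
      (by simp only [Pi.add_apply]; ring)
  exact hf'.unique ((hasDerivAt_const K 0).congr_of_eventuallyEq hf)

theorem mul_deriv_pos_and_lt_of_equilibriumResidual {c d σ q r r' K : ℝ}
    (hσ : 0 < σ) (hq : 0 < q) (hr : 0 < r) (hrS : r < K * c - σ)
    (hf : equilibriumResidual c d σ q r K = 0)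
    (hf' : (c - r' + d) * r + (K * c - σ - r + K * d) * r' + q * (c - r') = 0) :
    0 < K * r' ∧ K * r' < σ + r := by
  unfold equilibriumResidual at hf
  have hgap : 0 < r - (K * c - σ) - K * d := by
    nlinarith [mul_pos hq (sub_pos.2 hrS)]
  set D := r + q + (r - (K * c - σ) - K * d)
  have hD : 0 < D := by positivity
  have key : K * r' * D = (r + q) * (σ + r) := by
    linear_combination (-K) * hf' + hf
  constructor
  · exact pos_of_mul_pos_left (key ▸ by positivity) hD.le
  · refine lt_of_mul_lt_mul_right ?_ hD.le
    rw [key, mul_comm (σ + r)]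
    exact mul_lt_mul_of_pos_right (by linarith) (by positivity)

theorem stmt_13_general
    (b α1 ρ1 μ0 μ1' μ4' : ℝ)
    (hα1 : 0 < α1) (hρ1 : 0 < ρ1)
    (hμ04 : μ0 < μ4') (hμ41 : μ4' < μ1')
    (μ1 σ1 Kstar : ℝ)
    (hμ1 : μ1 = ρ1 + μ1') (hσ1 : σ1 = (μ1 - μ0) / α1)
    (R R' : ℝ → ℝ)
    (hderiv : ∀ K > Kstar, HasDerivAt R (R' K) K)
    (hroot : ∀ K > Kstar,
      0 < R K ∧ R K < K * (b - μ0) / b - σ1 ∧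
      ((K * (b - μ0) / b - σ1 - R K) + (K / b) * (μ0 - μ4')) * R K
        + (ρ1 / α1) * (K * (b - μ0) / b - σ1 - R K) = 0) :
    ∀ K > Kstar, 0 < K * R' K ∧ K * R' K < σ1 + R K := by
  have hσ1pos : 0 < σ1 := hσ1 ▸ div_pos (by linarith) hα1
  have hres : ∀ k > Kstar,
      equilibriumResidual ((b - μ0) / b) ((μ0 - μ4') / b) σ1 (ρ1 / α1) (R k) k = 0 := by
    intro k hk
    rw [← (hroot k hk).2.2, equilibriumResidual]
    ring
  intro K hK
  obtain ⟨hRpos, hRS, -⟩ := hroot K hK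
  refine mul_deriv_pos_and_lt_of_equilibriumResidual hσ1pos (div_pos hρ1 hα1) hRpos
    (by rwa [← mul_div_assoc]) (hres K hK) ?_
  exact equilibriumResidual_deriv_eq_zero (hderiv K hK)
    (eventually_of_mem (Ioi_mem_nhds hK) hres)

/-- Proposition 4: If `R : (K*, ∞) → ℝ` is differentiable with
`0 < R(K) < Ŝ₁(K)` and `f(R(K), K) = 0` for all `K > K*`, where
`Ŝ₁(K) = K(b-μ₀)/b - σ₁` and
`f(R, K) = ((Ŝ₁(K) - R) + (K/b)(μ₀ - μ₄'))R + (ρ₁/α₁)(Ŝ₁(K) - R)`,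
then `0 < K·R'(K) < σ₁ + R(K)` for all `K > K*`. -/
theorem stmt_13
    (b α1 ρ1 μ0 μ1' μ4' : ℝ)
    (hb : 0 < b) (hα1 : 0 < α1) (hρ1 : 0 < ρ1)
    (hμ0 : 0 < μ0) (hμ1' : 0 < μ1') (hμ4' : 0 < μ4')
    (hbμ0 : μ0 < b) (hμ04 : μ0 < μ4') (hμ41 : μ4' < μ1')
    (μ1 σ1 Kstar : ℝ)
    (hμ1 : μ1 = ρ1 + μ1') (hσ1 : σ1 = (μ1 - μ0) / α1)
    (hKstar : Kstar = b * σ1 / (b - μ0))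
    (R R' : ℝ → ℝ)
    (hderiv : ∀ K > Kstar, HasDerivAt R (R' K) K)
    (hroot : ∀ K > Kstar,
      0 < R K ∧ R K < K * (b - μ0) / b - σ1 ∧
      ((K * (b - μ0) / b - σ1 - R K) + (K / b) * (μ0 - μ4')) * R K
        + (ρ1 / α1) * (K * (b - μ0) / b - σ1 - R K) = 0) :
    ∀ K > Kstar, 0 < K * R' K ∧ K * R' K < σ1 + R K :=
  stmt_13_general b α1 ρ1 μ0 μ1' μ4' hα1 hρ1 hμ04 hμ41 μ1 σ1 Kstar hμ1 hσ1 R R' hderiv hroot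
end

section
/- Let S, I₁, R, b, K, α₁, ρ₁ be positive reals, let μ₀ < μ₁' and μ₁ = ρ₁ + μ₁', set N = S + I₁ + R, and assume the equilibrium relation α₁(S + I₁) = μ₁ − μ₀. Define a₀ = ρ₁α₁²SI₁²/R + (bα₁²/K)SI₁R + (bα₁ρ₁/K)SI₁, a₁ = α₁²SI₁ + (ρ₁b/K)I₁²/R + (ρ₁b/K)I₁ + (ρ₁b/K)SI₁/R, a₂ = (b/K)N + ρ₁I₁/R. Then a₀ > 0, a₁ > 0, a₂ > 0 and a₂a₁ − a₀ = (bα₁/K)(μ₁'−μ₀)SI₁ + ((b/K)N + ρ₁I₁/R)((ρ₁b/K)I₁²/R + (ρ₁b/K)I₁ + (ρ₁b/K)SI₁/R) > 0; consequently, by the Routh–Hurwitz criterion, every complex root of the cubic polynomial λ³ + a₂λ² + a₁λ + a₀ has negative real part. -/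
/-!
The algebraic part is a direct computation: expanding `a₂a₁ - a₀` and eliminating `α₁(S + I₁)`
via the equilibrium relation leaves a sum of positive terms. Stability then follows from the
Routh–Hurwitz criterion for real cubics, proved directly: a root `x + iy` with `x ≥ 0` is either
real, and then the cubic is positive at `x`, or has `y² = 3x² + 2a₂x + a₁` by the imaginary part,
and then the real part gives `a₀ - a₂a₁ = 8x³ + 8a₂x² + 2(a₂² + a₁)x ≥ 0`.
-/

theorem Complex.re_neg_of_cubic_eq_zero {a₀ a₁ a₂ : ℝ} (h₀ : 0 < a₀) (h₁ : 0 < a₁)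
    (h₂ : 0 < a₂) (h : a₀ < a₂ * a₁) {z : ℂ}
    (hz : z ^ 3 + (a₂ : ℂ) * z ^ 2 + (a₁ : ℂ) * z + (a₀ : ℂ) = 0) : z.re < 0 := by
  by_contra! hx
  obtain ⟨hre, him⟩ := Complex.ext_iff.mp hz
  simp only [Complex.add_re, Complex.add_im, Complex.mul_re, Complex.mul_im, pow_succ, pow_zero,
    one_mul, Complex.ofReal_re, Complex.ofReal_im, Complex.zero_re, Complex.zero_im] at hre him
  set x := z.re
  set y := z.im
  have hx2 : 0 ≤ x ^ 2 := sq_nonneg x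
  have hx3 : 0 ≤ x ^ 3 := pow_nonneg hx 3
  have hre' : x ^ 3 - 3 * x * y ^ 2 + a₂ * (x ^ 2 - y ^ 2) + a₁ * x + a₀ = 0 := by
    linear_combination hre
  have him' : y * (3 * x ^ 2 - y ^ 2 + 2 * a₂ * x + a₁) = 0 := by linear_combination him
  rcases mul_eq_zero.mp him' with hy | hy
  · rw [hy] at hre'
    nlinarith [mul_nonneg h₂.le hx2, mul_nonneg h₁.le hx]
  · have hy2 : y ^ 2 = 3 * x ^ 2 + 2 * a₂ * x + a₁ := by linear_combination -hy
    have : a₀ - a₂ * a₁ = 8 * x ^ 3 + 8 * a₂ * x ^ 2 + 2 * (a₂ ^ 2 + a₁) * x := by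
      rw [hy2] at hre'
      linear_combination hre'
    nlinarith [mul_nonneg h₂.le hx2, mul_nonneg (add_nonneg (sq_nonneg a₂) h₁.le) hx]

/-- Routh–Hurwitz stability of the block `J₁` of the Jacobian at the
single-strain equilibrium `G₃`. With the stated coefficients `a₀, a₁, a₂` one has
`a₀, a₁, a₂ > 0`, the identity for `a₂a₁ - a₀`, its positivity, and hence every
complex root of `λ³ + a₂λ² + a₁λ + a₀` has negative real part. -/
theorem stmt_16
    (S I1 R b K α1 ρ1 μ0 μ1' : ℝ)
    (hS : 0 < S) (hI1 : 0 < I1) (hR : 0 < R) (hb : 0 < b) (hK : 0 < K)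
    (hα1 : 0 < α1) (hρ1 : 0 < ρ1) (hμ01 : μ0 < μ1')
    (μ1 : ℝ) (hμ1 : μ1 = ρ1 + μ1')
    (N : ℝ) (hN : N = S + I1 + R)
    (heq : α1 * (S + I1) = μ1 - μ0)
    (a0 a1 a2 : ℝ)
    (ha0 : a0 = ρ1 * α1 ^ 2 * S * I1 ^ 2 / R + (b * α1 ^ 2 / K) * S * I1 * R
        + (b * α1 * ρ1 / K) * S * I1)
    (ha1 : a1 = α1 ^ 2 * S * I1 + (ρ1 * b / K) * I1 ^ 2 / R + (ρ1 * b / K) * I1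
        + (ρ1 * b / K) * S * I1 / R)
    (ha2 : a2 = (b / K) * N + ρ1 * I1 / R) :
    0 < a0 ∧ 0 < a1 ∧ 0 < a2 ∧
    a2 * a1 - a0 = (b * α1 / K) * (μ1' - μ0) * S * I1
      + ((b / K) * N + ρ1 * I1 / R) * ((ρ1 * b / K) * I1 ^ 2 / R + (ρ1 * b / K) * I1
        + (ρ1 * b / K) * S * I1 / R) ∧
    0 < a2 * a1 - a0 ∧
    ∀ z : ℂ, z ^ 3 + (a2 : ℂ) * z ^ 2 + (a1 : ℂ) * z + (a0 : ℂ) = 0 → z.re < 0 := by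
  have h₀ : 0 < a0 := by rw [ha0]; positivity
  have h₁ : 0 < a1 := by rw [ha1]; positivity
  have h₂ : 0 < a2 := by rw [ha2, hN]; positivity
  have hdet : a2 * a1 - a0 = (b * α1 / K) * (μ1' - μ0) * S * I1
      + ((b / K) * N + ρ1 * I1 / R) * ((ρ1 * b / K) * I1 ^ 2 / R + (ρ1 * b / K) * I1
        + (ρ1 * b / K) * S * I1 / R) := by
    subst ha0 ha1 ha2 hN hμ1
    field_simp
    linear_combination (b * S * R ^ 2 * K * α1) * heq
  have hdet_pos : 0 < a2 * a1 - a0 := by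
    have : 0 < μ1' - μ0 := sub_pos.mpr hμ01
    rw [hdet, hN]
    positivity
  exact ⟨h₀, h₁, h₂, hdet, hdet_pos, fun z hz =>
    Complex.re_neg_of_cubic_eq_zero h₀ h₁ h₂ (sub_pos.mp hdet_pos) hz⟩
end

section
/- (Proposition 5.) Let R : (K̂*, ∞) → ℝ be a differentiable function of K such that for every K > K̂*: 0 < R(K) < Ŝ₂(K) and f(R(K), K) = 0, where Ŝ₂(K) = K(b−μ₀)/b − σ₂ and f(R, K) = ((Ŝ₂(K) − R) + (K/b)(μ₀ − μ₄'))R + (ρ₂/α₂)(Ŝ₂(K) − R). Then for every K > K̂*, 0 < K·R'(K) < σ₂ + R(K). -/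
/-- Proposition 5: If `R : (K̂*, ∞) → ℝ` is differentiable with
`0 < R(K) < Ŝ₂(K)` and `f(R(K), K) = 0` for all `K > K̂*`, where
`Ŝ₂(K) = K(b-μ₀)/b - σ₂` and
`f(R, K) = ((Ŝ₂(K) - R) + (K/b)(μ₀ - μ₄'))R + (ρ₂/α₂)(Ŝ₂(K) - R)`,
then `0 < K·R'(K) < σ₂ + R(K)` for all `K > K̂*`. -/
theorem stmt_17
    (b α2 ρ2 μ0 μ2' μ4' : ℝ)
    (hb : 0 < b) (hα2 : 0 < α2) (hρ2 : 0 < ρ2)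
    (hμ0 : 0 < μ0) (hμ2' : 0 < μ2') (hμ4' : 0 < μ4')
    (hbμ0 : μ0 < b) (hμ04 : μ0 < μ4') (hμ42 : μ4' < μ2')
    (μ2 σ2 Khatstar : ℝ)
    (hμ2 : μ2 = ρ2 + μ2') (hσ2 : σ2 = (μ2 - μ0) / α2)
    (hKhatstar : Khatstar = b * σ2 / (b - μ0))
    (R R' : ℝ → ℝ)
    (hderiv : ∀ K > Khatstar, HasDerivAt R (R' K) K)
    (hroot : ∀ K > Khatstar,
      0 < R K ∧ R K < K * (b - μ0) / b - σ2 ∧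
      ((K * (b - μ0) / b - σ2 - R K) + (K / b) * (μ0 - μ4')) * R K
        + (ρ2 / α2) * (K * (b - μ0) / b - σ2 - R K) = 0) :
    ∀ K > Khatstar, 0 < K * R' K ∧ K * R' K < σ2 + R K := by
  have hσ2pos : 0 < σ2 := by
    rw [hσ2, hμ2]
    have : 0 < ρ2 + μ2' - μ0 := by linarith
    positivity
  intro K hK
  obtain ⟨hr0, hrs, hE1⟩ := hroot K hK
  have hR := hderiv K hK
  have hKpos : 0 < K := by
    have : 0 < Khatstar := by
      rw [hKhatstar]
      have : 0 < b - μ0 := by linarith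
      positivity
    linarith
  -- derivative of the implicit equation
  have hid : HasDerivAt (fun x : ℝ => x) 1 K := hasDerivAt_id K
  have hS : HasDerivAt (fun x : ℝ => x * (b - μ0) / b - σ2) (1 * (b - μ0) / b) K :=
    ((hid.mul_const (b - μ0)).div_const b).sub_const σ2
  have h1 : HasDerivAt (fun x : ℝ => x * (b - μ0) / b - σ2 - R x)
      (1 * (b - μ0) / b - R' K) K := hS.sub hR
  have h2 : HasDerivAt (fun x : ℝ => x / b * (μ0 - μ4')) (1 / b * (μ0 - μ4')) K :=
    (hid.div_const b).mul_const (μ0 - μ4')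
  have hg : HasDerivAt (fun x : ℝ =>
      ((x * (b - μ0) / b - σ2 - R x) + x / b * (μ0 - μ4')) * R x
        + (ρ2 / α2) * (x * (b - μ0) / b - σ2 - R x))
      (((1 * (b - μ0) / b - R' K) + 1 / b * (μ0 - μ4')) * R K
        + ((K * (b - μ0) / b - σ2 - R K) + K / b * (μ0 - μ4')) * R' K
        + (ρ2 / α2) * (1 * (b - μ0) / b - R' K)) K :=
    ((h1.add h2).mul hR).add (h1.const_mul (ρ2 / α2))
  have heq : (fun x : ℝ =>
      ((x * (b - μ0) / b - σ2 - R x) + x / b * (μ0 - μ4')) * R x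
        + (ρ2 / α2) * (x * (b - μ0) / b - σ2 - R x)) =ᶠ[nhds K] fun _ => (0 : ℝ) := by
    filter_upwards [eventually_gt_nhds hK] with x hx
    have h := (hroot x hx).2.2
    linarith [h]
  have h0 : HasDerivAt (fun x : ℝ =>
      ((x * (b - μ0) / b - σ2 - R x) + x / b * (μ0 - μ4')) * R x
        + (ρ2 / α2) * (x * (b - μ0) / b - σ2 - R x)) 0 K :=
    (hasDerivAt_const K (0 : ℝ)).congr_of_eventuallyEq heq
  have hE2 : (((1 * (b - μ0) / b - R' K) + 1 / b * (μ0 - μ4')) * R K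
        + ((K * (b - μ0) / b - σ2 - R K) + K / b * (μ0 - μ4')) * R' K
        + (ρ2 / α2) * (1 * (b - μ0) / b - R' K)) = 0 := hg.unique h0
  set r := R K with hr
  set r' := R' K with hr'
  set s : ℝ := K * (b - μ0) / b - σ2 with hs
  have hspos : 0 < s := lt_trans hr0 hrs
  have hq : 0 < ρ2 / α2 := by positivity
  -- key identity from implicit differentiation
  have key : K * r' * (r ^ 2 + (ρ2 / α2) * s) = r * (r + σ2) * (r + ρ2 / α2) := by
    rw [hs]
    linear_combination (r + K * r') * hE1 - K * r * hE2
  have hP : 0 < r ^ 2 + (ρ2 / α2) * s := by positivity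
  have hRHS : 0 < r * (r + σ2) * (r + ρ2 / α2) := by positivity
  constructor
  · nlinarith [key, hP, hRHS]
  · nlinarith [key, hP, mul_pos (mul_pos (by linarith : (0:ℝ) < σ2 + r) hq) (sub_pos.2 hrs)]
end

section
/- Assume b > μ₄' > μ₀, α₁ > 0, ρ₁ > 0, and σ₁ > 0. For each K > K* = bσ₁/(b−μ₀), let R(K) be the unique root in (0, Ŝ₁(K)) of f(R, K) = ((Ŝ₁(K) − R) + (K/b)(μ₀ − μ₄'))R + (ρ₁/α₁)(Ŝ₁(K) − R), where Ŝ₁(K) = K(b−μ₀)/b − σ₁. Then R(K)/K → (b−μ₄')/b as K → ∞; i.e. the recovered population at the single-strain equilibrium G₃ grows like R** = K(b−μ₄')/b as the carrying capacity K grows. -/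
open Filter Topology

set_option maxHeartbeats 1000000

/-- If for each `K > K* = bσ₁/(b-μ₀)` the value `R K` is the root in
`(0, Ŝ₁(K))` of `f(R, K) = ((Ŝ₁(K) - R) + (K/b)(μ₀ - μ₄'))R + (ρ₁/α₁)(Ŝ₁(K) - R)`,
where `Ŝ₁(K) = K(b-μ₀)/b - σ₁`, then `R(K)/K → (b-μ₄')/b` as `K → ∞`; i.e. the
recovered population at `G₃` grows like `R** = K(b-μ₄')/b` as `K` grows. -/
theorem stmt_18
    (b α1 ρ1 μ0 μ1' μ4' : ℝ)
    (hb : 0 < b) (hα1 : 0 < α1) (hρ1 : 0 < ρ1)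
    (hμ0 : 0 < μ0) (hμ1' : 0 < μ1') (hμ4' : 0 < μ4')
    (hμ04 : μ0 < μ4') (hμ4b : μ4' < b)
    (μ1 σ1 Kstar : ℝ)
    (hμ1 : μ1 = ρ1 + μ1') (hσ1 : σ1 = (μ1 - μ0) / α1) (hσ1pos : 0 < σ1)
    (hKstar : Kstar = b * σ1 / (b - μ0))
    (R : ℝ → ℝ)
    (hroot : ∀ K > Kstar,
      (0 < R K ∧ R K < K * (b - μ0) / b - σ1) ∧
      ((K * (b - μ0) / b - σ1 - R K) + (K / b) * (μ0 - μ4')) * R K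
        + (ρ1 / α1) * (K * (b - μ0) / b - σ1 - R K) = 0) :
    Tendsto (fun K => R K / K) atTop (𝓝 ((b - μ4') / b)) := by
  set L : ℝ := (b - μ4') / b with hL
  set c : ℝ := σ1 + ρ1 / α1 with hc
  have hLpos : 0 < L := div_pos (by linarith) hb
  -- the comparison function
  set g : ℝ → ℝ := fun K =>
    (L - c / K + Real.sqrt ((L - c / K) ^ 2
      + 4 * (ρ1 / α1) * (K * (b - μ0) / b - σ1) / K ^ 2)) / 2 with hg
  -- limit of g
  have h1 : Tendsto (fun K : ℝ => L - c / K) atTop (𝓝 L) := by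
    have := tendsto_const_nhds.div_atTop (tendsto_id (α := ℝ)) (a := c)
    simpa using tendsto_const_nhds.sub this
  have h2 : Tendsto (fun K : ℝ => 4 * (ρ1 / α1) * (K * (b - μ0) / b - σ1) / K ^ 2)
      atTop (𝓝 0) := by
    have e1 : Tendsto (fun K : ℝ => 4 * (ρ1 / α1) * ((b - μ0) / b / K - σ1 / K ^ 2))
        atTop (𝓝 (4 * (ρ1 / α1) * (0 - 0))) := by
      refine tendsto_const_nhds.mul (Tendsto.sub ?_ ?_)
      · exact tendsto_const_nhds.div_atTop tendsto_id
      · exact tendsto_const_nhds.div_atTop (tendsto_pow_atTop (by norm_num))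
    have e2 : (fun K : ℝ => 4 * (ρ1 / α1) * ((b - μ0) / b / K - σ1 / K ^ 2))
        =ᶠ[atTop] fun K => 4 * (ρ1 / α1) * (K * (b - μ0) / b - σ1) / K ^ 2 := by
      filter_upwards [eventually_gt_atTop (0 : ℝ)] with K hK
      field_simp
    simpa using e1.congr' e2
  have hgt : Tendsto g atTop (𝓝 L) := by
    have hs : Tendsto (fun K : ℝ =>
        Real.sqrt ((L - c / K) ^ 2 + 4 * (ρ1 / α1) * (K * (b - μ0) / b - σ1) / K ^ 2))
        atTop (𝓝 (Real.sqrt (L ^ 2 + 0))) :=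
      (Real.continuous_sqrt.tendsto _).comp (((h1.pow 2).add h2))
    have : Tendsto g atTop (𝓝 ((L + Real.sqrt (L ^ 2 + 0)) / 2)) :=
      (h1.add hs).div_const 2
    have hsq : Real.sqrt (L ^ 2 + 0) = L := by
      rw [add_zero, Real.sqrt_sq hLpos.le]
    rwa [hsq, show (L + L) / 2 = L by ring] at this
  -- eventual equality
  refine hgt.congr' ?_
  filter_upwards [eventually_gt_atTop Kstar, eventually_gt_atTop (0 : ℝ)] with K hK hK0
  obtain ⟨⟨hRpos, _⟩, hq⟩ := hroot K hK
  set S : ℝ := K * (b - μ0) / b - σ1 with hS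
  set A : ℝ := S + (K / b) * (μ0 - μ4') - ρ1 / α1 with hA
  set C : ℝ := (ρ1 / α1) * S with hC
  have hq' : (R K) ^ 2 = A * R K + C := by
    rw [hA, hC]; linear_combination -hq
  have hbμ : b - μ0 ≠ 0 := by linarith
  have hbne : b ≠ 0 := ne_of_gt hb
  have hαne : α1 ≠ 0 := ne_of_gt hα1
  have hKne : K ≠ 0 := ne_of_gt hK0
  have hKsσ : Kstar * (b - μ0) / b = σ1 := by
    rw [hKstar]; field_simp
  have hSpos : 0 < S := by
    have hfrac : 0 < (b - μ0) / b := div_pos (by linarith) hb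
    have h := mul_lt_mul_of_pos_right hK hfrac
    have e : S = K * ((b - μ0) / b) - Kstar * ((b - μ0) / b) := by
      rw [hS, ← hKsσ]; ring
    linarith [h, e.ge]
  have hCpos : 0 < C := mul_pos (div_pos hρ1 hα1) hSpos
  have h2RA : 0 < 2 * R K - A := by
    nlinarith [hq', hRpos, hCpos]
  have hsqeq : A ^ 2 + 4 * C = (2 * R K - A) ^ 2 := by
    linear_combination -4 * hq'
  have hsqrt : Real.sqrt (A ^ 2 + 4 * C) = 2 * R K - A := by
    rw [hsqeq, Real.sqrt_sq h2RA.le]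
  have hRformula : R K = (A + Real.sqrt (A ^ 2 + 4 * C)) / 2 := by
    rw [hsqrt]; ring
  -- now compute g K
  have hAK : L - c / K = A / K := by
    rw [hL, hc, hA, hS]; field_simp; ring
  have hinner : (L - c / K) ^ 2 + 4 * (ρ1 / α1) * (K * (b - μ0) / b - σ1) / K ^ 2
      = (A ^ 2 + 4 * C) / K ^ 2 := by
    rw [hAK, hC, hS]
    field_simp
  have hsqK : Real.sqrt ((A ^ 2 + 4 * C) / K ^ 2) = Real.sqrt (A ^ 2 + 4 * C) / K := by
    rw [Real.sqrt_div (by nlinarith [hsqeq, sq_nonneg (2 * R K - A)]),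
      Real.sqrt_sq hK0.le]
  show g K = R K / K
  rw [hg]
  simp only
  rw [hinner, hsqK, hAK, hRformula]
  ring
end

section
/- (Global stability of the disease-free equilibrium G₂.) Let (S, I₁, I₂, I₁₂, R) be a solution of the coinfection model with all components nonnegative and S(0) > 0. Assume μ₀ < μ₄' < μⱼ' for j = 1,2,3 and S** < min{ (μ₁'−μ₀)/α₁, (μ₂'−μ₀)/α₂, (μ₃'−μ₀)/α̂₃ }, where α̂₃ = β₁+β₂+α₃. Then lim_{t→∞} I₁(t) = lim_{t→∞} I₂(t) = lim_{t→∞} I₁₂(t) = lim_{t→∞} R(t) = 0 and lim_{t→∞} S(t) = S**. -/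
/-!
Write `W = I₁ + I₂ + I₁₂ + R` and `A = α₁ I₁ + α₂ I₂ + α̂₃ I₁₂` (the force of infection).
The total population `N = S + W` satisfies `N' ≤ (b/K) N (S** - N)`, so eventually
`N ≤ S** + ε`. Along solutions
`(W/S)' / (W/S) = (A N - (μ₁' - μ₀) I₁ - (μ₂' - μ₀) I₂ - (μ₃' - μ₀) I₁₂ - (μ₄' - μ₀) R) / W`,
and the smallness of `S**` makes this at most `-ε` once `N ≤ S** + ε`: so `W/S`, and with it
`W`, decays exponentially. Finally `(log S)' = (b/K) (S** - S) - ((b/K) W + A)` with a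
perturbation tending to `0`, which forces `S → S**`.
-/

open Filter Topology Set Real

section Comparison

variable {f f' : ℝ → ℝ}

theorem le_mul_exp_of_hasDerivAt_le_mul {a b K : ℝ} (hf : ∀ x ∈ Icc a b, HasDerivAt f (f' x) x)
    (bound : ∀ x ∈ Ico a b, f' x ≤ K * f x) : ∀ x ∈ Icc a b, f x ≤ f a * exp (K * (x - a)) := by
  intro x hx
  simpa only [gronwallBound_ε0] using le_gronwallBound_of_liminf_deriv_right_le
    (fun y hy => (hf y hy).continuousAt.continuousWithinAt)
    (fun y hy _ hr => (hf y (Ico_subset_Icc_self hy)).hasDerivWithinAt.liminf_right_slope_le hr)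
    le_rfl (K := K) (ε := 0) (fun y hy => by simpa using bound y hy) x hx

theorem pos_of_hasDerivAt_eq_mul {φ : ℝ → ℝ} {a : ℝ} (hf : ∀ t ≥ a, HasDerivAt f (φ t * f t) t)
    (hφ : ContinuousOn φ (Ici a)) (hnonneg : ∀ t ≥ a, 0 ≤ f t) (ha : 0 < f a) :
    ∀ t ≥ a, 0 < f t := by
  intro T hT
  obtain ⟨C, hC⟩ := isCompact_Icc.exists_bound_of_continuousOn
    (hφ.mono Icc_subset_Ici_self : ContinuousOn φ (Icc a T))
  have hneg : ∀ x ∈ Icc a T, HasDerivAt (-f) (-(φ x * f x)) x := fun x hx => (hf x hx.1).neg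
  have key := le_mul_exp_of_hasDerivAt_le_mul hneg (K := -C) (fun x hx => by
    have := (abs_le.1 (hC x (Ico_subset_Icc_self hx))).1
    simp only [Pi.neg_apply]
    nlinarith [hnonneg x hx.1]) T ⟨hT, le_rfl⟩
  simp only [Pi.neg_apply, neg_mul, neg_le_neg_iff] at key
  exact lt_of_lt_of_le (by positivity) key

theorem tendsto_zero_of_hasDerivAt_le_neg_mul {t₀ δ : ℝ} (hδ : 0 < δ)
    (hf : ∀ t ≥ t₀, HasDerivAt f (f' t) t) (bound : ∀ t ≥ t₀, f' t ≤ -δ * f t)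
    (hnonneg : ∀ t ≥ t₀, 0 ≤ f t) : Tendsto f atTop (𝓝 0) := by
  have hexp : Tendsto (fun t => f t₀ * exp (-δ * (t - t₀))) atTop (𝓝 0) := by
    have : Tendsto (fun t => -δ * (t - t₀)) atTop atBot :=
      (tendsto_atTop_add_const_right _ _ tendsto_id).const_mul_atTop_of_neg (by linarith)
    simpa using (tendsto_exp_atBot.comp this).const_mul (f t₀)
  refine tendsto_of_tendsto_of_tendsto_of_le_of_le' tendsto_const_nhds hexp ?_ ?_
  · filter_upwards [eventually_ge_atTop t₀] with t ht using hnonneg t ht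
  · filter_upwards [eventually_ge_atTop t₀] with t ht
    exact le_mul_exp_of_hasDerivAt_le_mul (fun x hx => hf x hx.1) (fun x hx => bound x hx.1)
      t ⟨ht, le_rfl⟩

theorem eventually_le_of_hasDerivAt_ge_below {t₀ c δ : ℝ} (hδ : 0 < δ)
    (hf : ∀ t ≥ t₀, HasDerivAt f (f' t) t) (hgrow : ∀ t ≥ t₀, f t ≤ c → δ ≤ f' t) :
    ∀ᶠ t in atTop, c ≤ f t := by
  have stays : ∀ a ≥ t₀, c ≤ f a → ∀ b ≥ a, c ≤ f b := by
    intro a ha hfa b hab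
    have := image_le_of_deriv_right_lt_deriv_boundary (f := -f) (f' := fun t => -f' t)
      (B := fun _ => -c) (B' := fun _ => 0)
      (fun t ht => (hf t (ha.trans ht.1)).continuousAt.neg.continuousWithinAt)
      (fun t ht => (hf t (ha.trans ht.1)).neg.hasDerivWithinAt) (by simpa using hfa)
      (fun _ => hasDerivAt_const _ _)
      (fun t ht hft => by linarith [hgrow t (ha.trans ht.1) (by simp at hft; linarith)])
      ⟨hab, le_rfl⟩
    simpa using this
  obtain ⟨a, ha, hfa⟩ : ∃ a ≥ t₀, c ≤ f a := by
    by_contra! hlt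
    have hmono := (convex_Ici t₀).mul_sub_le_image_sub_of_le_deriv
      (fun t ht => (hf t ht).continuousAt.continuousWithinAt)
      (fun t ht => (hf t (interior_subset ht)).differentiableAt.differentiableWithinAt)
      (C := δ) (fun t ht => by
        rw [(hf t (interior_subset ht)).deriv]
        exact hgrow t (interior_subset ht) (hlt t (interior_subset ht)).le)
    set T := t₀ + (c - f t₀) / δ
    have hT : t₀ ≤ T := le_add_of_nonneg_right (div_nonneg (by linarith [hlt t₀ le_rfl]) hδ.le)
    have := hmono t₀ self_mem_Ici T hT hT
    have : δ * (T - t₀) = c - f t₀ := by simp only [T]; field_simp; ring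
    linarith [hlt T hT]
  filter_upwards [eventually_ge_atTop a] with b hb using stays a ha hfa b hb

theorem tendsto_zero_of_ratio_decay {W W' S S' : ℝ → ℝ} {t₀ δ C : ℝ} (hδ : 0 < δ)
    (hW : ∀ t ≥ t₀, HasDerivAt W (W' t) t) (hS : ∀ t ≥ t₀, HasDerivAt S (S' t) t)
    (hSpos : ∀ t ≥ t₀, 0 < S t) (hSle : ∀ t ≥ t₀, S t ≤ C) (hWnn : ∀ t ≥ t₀, 0 ≤ W t)
    (bound : ∀ t ≥ t₀, W' t * S t - W t * S' t ≤ -δ * W t * S t) :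
    Tendsto W atTop (𝓝 0) := by
  have hratio : Tendsto (fun t => W t / S t) atTop (𝓝 0) :=
    tendsto_zero_of_hasDerivAt_le_neg_mul hδ (fun t ht => (hW t ht).div (hS t ht) (hSpos t ht).ne')
      (fun t ht => by
        have hSt := hSpos t ht
        rw [div_le_iff₀ (by positivity), mul_div_assoc', div_mul_eq_mul_div, le_div_iff₀ hSt]
        nlinarith [bound t ht])
      (fun t ht => div_nonneg (hWnn t ht) (hSpos t ht).le)
  refine tendsto_of_tendsto_of_tendsto_of_le_of_le' tendsto_const_nhds
    (by simpa using hratio.mul_const C) ?_ ?_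
  · filter_upwards [eventually_ge_atTop t₀] with t ht using hWnn t ht
  · filter_upwards [eventually_ge_atTop t₀] with t ht
    calc W t = W t / S t * S t := (div_mul_cancel₀ _ (hSpos t ht).ne').symm
      _ ≤ W t / S t * C := mul_le_mul_of_nonneg_left (hSle t ht)
          (div_nonneg (hWnn t ht) (hSpos t ht).le)

end Comparison

theorem eventually_le_add_of_hasDerivAt_le_logistic {N N' : ℝ → ℝ} {t₀ r M ε : ℝ} (hr : 0 < r)
    (hM : 0 ≤ M) (hε : 0 < ε) (hN : ∀ t ≥ t₀, HasDerivAt N (N' t) t)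
    (bound : ∀ t ≥ t₀, N' t ≤ r * N t * (M - N t)) : ∀ᶠ t in atTop, N t ≤ M + ε := by
  have hbarrier := eventually_le_of_hasDerivAt_ge_below (f := -N) (f' := fun t => -N' t)
    (c := -(M + ε)) (by positivity : 0 < r * (M + ε) * ε) (fun t ht => (hN t ht).neg)
    (fun t ht hle => by
      have hNt : M + ε ≤ N t := by simpa using hle
      nlinarith [bound t ht, mul_le_mul_of_nonneg_left hNt (by positivity : 0 ≤ r * (M + ε))])
  filter_upwards [hbarrier] with t ht
  simpa using ht

theorem eventually_sub_le_of_hasDerivAt_logistic_sub {S p : ℝ → ℝ} {t₀ r M ε : ℝ} (hr : 0 < r)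
    (hε : 0 < ε) (hS : ∀ t ≥ t₀, HasDerivAt S ((r * (M - S t) - p t) * S t) t)
    (hpos : ∀ t ≥ t₀, 0 < S t) (hp : Tendsto p atTop (𝓝 0)) :
    ∀ᶠ t in atTop, M - ε ≤ S t := by
  rcases le_or_gt M ε with hMε | hMε
  · filter_upwards [eventually_ge_atTop t₀] with t ht
    linarith [hpos t ht]
  obtain ⟨t₁, ht₁⟩ := eventually_atTop.1
    ((hp.eventually (gt_mem_nhds (by positivity : 0 < r * ε / 2))).and (eventually_ge_atTop t₀))
  -- while `S ≤ M - ε`, `log S` grows at rate `r (M - S) - p ≥ r ε / 2`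
  have hlog := eventually_le_of_hasDerivAt_ge_below (f := fun t => log (S t))
    (f' := fun t => r * (M - S t) - p t) (c := log (M - ε)) (by positivity : 0 < r * ε / 2)
    (fun t ht => ((hS t (ht₁ t ht).2).log (hpos t (ht₁ t ht).2).ne').congr_deriv
      (mul_div_cancel_right₀ _ (hpos t (ht₁ t ht).2).ne'))
    (fun t ht hle => by
      have hSt := (log_le_log_iff (hpos t (ht₁ t ht).2) (by linarith)).1 hle
      nlinarith [(ht₁ t ht).1])
  filter_upwards [hlog, eventually_ge_atTop t₀] with t h ht
  exact (log_le_log_iff (by linarith) (hpos t ht)).1 h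

theorem tendsto_of_hasDerivAt_logistic_sub {S p : ℝ → ℝ} {t₀ r M : ℝ} (hr : 0 < r) (hM : 0 ≤ M)
    (hS : ∀ t ≥ t₀, HasDerivAt S ((r * (M - S t) - p t) * S t) t) (hpos : ∀ t ≥ t₀, 0 < S t)
    (hp_nonneg : ∀ t ≥ t₀, 0 ≤ p t) (hp : Tendsto p atTop (𝓝 0)) :
    Tendsto S atTop (𝓝 M) := by
  refine tendsto_order.2 ⟨fun a ha => ?_, fun a ha => ?_⟩
  · filter_upwards [eventually_sub_le_of_hasDerivAt_logistic_sub hr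
      (by linarith : 0 < (M - a) / 2) hS hpos hp] with t ht
    linarith
  · filter_upwards [eventually_le_add_of_hasDerivAt_le_logistic hr hM
      (by linarith : 0 < (a - M) / 2) hS fun t ht => by nlinarith [hpos t ht, hp_nonneg t ht]]
      with t ht
    linarith

theorem eventually_mul_add_add_lt {a M c : ℝ} (h : a * M < c) :
    ∀ᶠ ε in 𝓝[>] 0, a * (M + ε) + ε < c := by
  have hlim : Tendsto (fun ε : ℝ => a * (M + ε) + ε) (𝓝[>] 0) (𝓝 (a * M)) :=
    tendsto_nhdsWithin_of_tendsto_nhds ((by fun_prop : Continuous _).tendsto' 0 _ (by simp))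
  exact hlim.eventually_lt_const h

/- A population split into susceptibles `S` and the rest `W`, whose total `N = S + W` grows
logistically at rate `r (M - N)` above the natural mortality `μ₀`; `A` is the force of infection
and `D` the total mortality of the `W`-classes. -/
section ReducedSystem

variable {S W A D : ℝ → ℝ} {r M μ₀ ε t₀ : ℝ}

theorem tendsto_zero_of_infection_margin (hr : 0 < r) (hM : 0 ≤ M) (hε : 0 < ε)
    (hS : ∀ t ≥ t₀, HasDerivAt S ((r * (M - (S t + W t)) - A t) * S t) t)
    (hW : ∀ t ≥ t₀, HasDerivAt W ((r * (M - (S t + W t)) + μ₀) * W t + A t * S t - D t) t)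
    (hSpos : ∀ t ≥ t₀, 0 < S t) (hWnn : ∀ t ≥ t₀, 0 ≤ W t) (hAnn : ∀ t ≥ t₀, 0 ≤ A t)
    (hmargin : ∀ t ≥ t₀, A t * (M + ε) + ε * W t ≤ D t - μ₀ * W t) :
    Tendsto W atTop (𝓝 0) := by
  have hN : ∀ t ≥ t₀, HasDerivAt (fun t => S t + W t)
      (r * (S t + W t) * (M - (S t + W t)) - (D t - μ₀ * W t)) t :=
    fun t ht => ((hS t ht).add (hW t ht)).congr_deriv (by ring)
  obtain ⟨t₁, ht₁⟩ := eventually_atTop.1 ((eventually_le_add_of_hasDerivAt_le_logistic hr hM hε hN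
    fun t ht => by nlinarith [hmargin t ht, hAnn t ht, hWnn t ht]).and (eventually_ge_atTop t₀))
  refine tendsto_zero_of_ratio_decay (t₀ := t₁) (C := M + ε) hε (fun t ht => hW t (ht₁ t ht).2)
    (fun t ht => hS t (ht₁ t ht).2) (fun t ht => hSpos t (ht₁ t ht).2)
    (fun t ht => by linarith [(ht₁ t ht).1, hWnn t (ht₁ t ht).2])
    (fun t ht => hWnn t (ht₁ t ht).2) fun t ht => ?_
  obtain ⟨hNt, ht⟩ := ht₁ t ht
  -- `W' S - W S' = S (A N - (D - μ₀ W))`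
  have key : A t * (S t + W t) - (D t - μ₀ * W t) ≤ -ε * W t := by
    nlinarith [mul_le_mul_of_nonneg_left hNt (hAnn t ht), hmargin t ht]
  linear_combination mul_le_mul_of_nonneg_left key (hSpos t ht).le

theorem tendsto_disease_free_of_infection_margin {a : ℝ} (hr : 0 < r) (hM : 0 ≤ M) (hε : 0 < ε)
    (hS : ∀ t ≥ t₀, HasDerivAt S ((r * (M - (S t + W t)) - A t) * S t) t)
    (hW : ∀ t ≥ t₀, HasDerivAt W ((r * (M - (S t + W t)) + μ₀) * W t + A t * S t - D t) t)
    (hS₀ : 0 < S t₀) (hSnn : ∀ t ≥ t₀, 0 ≤ S t) (hWnn : ∀ t ≥ t₀, 0 ≤ W t)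
    (hAnn : ∀ t ≥ t₀, 0 ≤ A t) (hA_cont : ContinuousOn A (Ici t₀))
    (hA_le : ∀ t ≥ t₀, A t ≤ a * W t)
    (hmargin : ∀ t ≥ t₀, A t * (M + ε) + ε * W t ≤ D t - μ₀ * W t) :
    Tendsto W atTop (𝓝 0) ∧ Tendsto S atTop (𝓝 M) := by
  have hS_cont : ContinuousOn S (Ici t₀) := fun t ht => (hS t ht).continuousAt.continuousWithinAt
  have hW_cont : ContinuousOn W (Ici t₀) := fun t ht => (hW t ht).continuousAt.continuousWithinAt
  have hSpos := pos_of_hasDerivAt_eq_mul hS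
    ((continuousOn_const.mul (continuousOn_const.sub (hS_cont.add hW_cont))).sub hA_cont) hSnn hS₀
  have hWto := tendsto_zero_of_infection_margin hr hM hε hS hW hSpos hWnn hAnn hmargin
  have hAto : Tendsto A atTop (𝓝 0) :=
    squeeze_zero' (eventually_atTop.2 ⟨t₀, hAnn⟩) (eventually_atTop.2 ⟨t₀, hA_le⟩)
      (by simpa using hWto.const_mul a)
  refine ⟨hWto, tendsto_of_hasDerivAt_logistic_sub (p := fun t => r * W t + A t) hr hM
    (fun t ht => (hS t ht).congr_deriv (by ring)) hSpos
    (fun t ht => add_nonneg (mul_nonneg hr.le (hWnn t ht)) (hAnn t ht)) ?_⟩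
  simpa using (hWto.const_mul r).add hAto

end ReducedSystem

theorem stmt_19_general
    (b K α1 α2 α3 β1 β2 γ1 γ2 η1 η2 ρ1 ρ2 ρ3 μ0 μ1' μ2' μ3' μ4' : ℝ)
    (hb : 0 < b) (hK : 0 < K) (hα1 : 0 < α1) (hα2 : 0 < α2) (hα3 : 0 < α3)
    (hβ1 : 0 < β1) (hβ2 : 0 < β2) (hbμ0 : μ0 < b) (hμ04 : μ0 < μ4')
    (μ1 μ2 μ3 : ℝ) (hμ1 : μ1 = ρ1 + μ1') (hμ2 : μ2 = ρ2 + μ2') (hμ3 : μ3 = ρ3 + μ3')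
    (S I1 I2 I12 R N : ℝ → ℝ)
    (hN : ∀ t, N t = S t + I1 t + I2 t + I12 t + R t)
    (hS : ∀ t ≥ (0:ℝ), HasDerivAt S
      ((b * (1 - N t / K) - α1 * I1 t - α2 * I2 t - (β1 + β2 + α3) * I12 t - μ0) * S t) t)
    (hI1 : ∀ t ≥ (0:ℝ), HasDerivAt I1
      ((b * (1 - N t / K) + α1 * S t - η1 * I12 t - γ1 * I2 t - μ1) * I1 t
        + β1 * S t * I12 t) t)
    (hI2 : ∀ t ≥ (0:ℝ), HasDerivAt I2
      ((b * (1 - N t / K) + α2 * S t - η2 * I12 t - γ2 * I1 t - μ2) * I2 t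
        + β2 * S t * I12 t) t)
    (hI12 : ∀ t ≥ (0:ℝ), HasDerivAt I12
      ((b * (1 - N t / K) + α3 * S t + η1 * I1 t + η2 * I2 t - μ3) * I12 t
        + (γ1 + γ2) * I1 t * I2 t) t)
    (hR : ∀ t ≥ (0:ℝ), HasDerivAt R
      ((b * (1 - N t / K) - μ4') * R t + ρ1 * I1 t + ρ2 * I2 t + ρ3 * I12 t) t)
    (hnonneg : ∀ t ≥ (0:ℝ), 0 ≤ S t ∧ 0 ≤ I1 t ∧ 0 ≤ I2 t ∧ 0 ≤ I12 t ∧ 0 ≤ R t)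
    (hS0 : 0 < S 0)
    (Sss : ℝ) (hSss : Sss = K * (b - μ0) / b)
    (hsmall : Sss < min ((μ1' - μ0) / α1) (min ((μ2' - μ0) / α2)
        ((μ3' - μ0) / (β1 + β2 + α3)))) :
    Tendsto I1 atTop (𝓝 0) ∧ Tendsto I2 atTop (𝓝 0) ∧ Tendsto I12 atTop (𝓝 0)
      ∧ Tendsto R atTop (𝓝 0) ∧ Tendsto S atTop (𝓝 Sss) := by
  have hα : 0 < β1 + β2 + α3 := by positivity
  rw [lt_min_iff, lt_min_iff, lt_div_iff₀ hα1, lt_div_iff₀ hα2, lt_div_iff₀ hα] at hsmall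
  obtain ⟨hs1, hs2, hs3⟩ := hsmall
  -- one `ε` serving all four classes; `R` carries no infection term, whence `a := 0`
  obtain ⟨ε, ⟨hε1, hε2, hε3, hε4⟩, hε⟩ :=
    ((eventually_mul_add_add_lt (a := α1) (M := Sss) (c := μ1' - μ0) (by linarith)).and
      ((eventually_mul_add_add_lt (a := α2) (M := Sss) (c := μ2' - μ0) (by linarith)).and
      ((eventually_mul_add_add_lt (a := β1 + β2 + α3) (M := Sss) (c := μ3' - μ0)
        (by linarith)).and
      (eventually_mul_add_add_lt (a := 0) (M := Sss) (c := μ4' - μ0) (by linarith))))).and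
      self_mem_nhdsWithin |>.exists
  set W : ℝ → ℝ := fun t => I1 t + I2 t + I12 t + R t
  set A : ℝ → ℝ := fun t => α1 * I1 t + α2 * I2 t + (β1 + β2 + α3) * I12 t
  set D : ℝ → ℝ := fun t => μ1' * I1 t + μ2' * I2 t + μ3' * I12 t + μ4' * R t
  have hNW : ∀ t, N t = S t + W t := fun t => (hN t).trans (by simp only [W]; ring)
  have hS' : ∀ t ≥ (0 : ℝ), HasDerivAt S ((b / K * (Sss - (S t + W t)) - A t) * S t) t :=
    fun t ht => (hS t ht).congr_deriv (by simp only [W, A]; rw [hNW t, hSss]; field_simp; ring)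
  have hW' : ∀ t ≥ (0 : ℝ), HasDerivAt W
      ((b / K * (Sss - (S t + W t)) + μ0) * W t + A t * S t - D t) t := fun t ht =>
    ((((hI1 t ht).add (hI2 t ht)).add (hI12 t ht)).add (hR t ht)).congr_deriv
      (by simp only [W, A, D]; rw [hNW t, hSss, hμ1, hμ2, hμ3]; field_simp; ring)
  have hA_cont : ContinuousOn A (Ici 0) := fun t ht =>
    ((((hI1 t ht).const_mul α1).add ((hI2 t ht).const_mul α2)).add
      ((hI12 t ht).const_mul _)).continuousAt.continuousWithinAt
  have hA_le : ∀ t ≥ (0 : ℝ), A t ≤ (α1 + α2 + (β1 + β2 + α3)) * W t := fun t ht => by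
    obtain ⟨-, h1, h2, h3, h4⟩ := hnonneg t ht
    simp only [A, W]
    nlinarith
  have hmargin : ∀ t ≥ (0 : ℝ), A t * (Sss + ε) + ε * W t ≤ D t - μ0 * W t := fun t ht => by
    obtain ⟨-, h1, h2, h3, h4⟩ := hnonneg t ht
    simp only [A, W, D]
    nlinarith [mul_le_mul_of_nonneg_right hε1.le h1, mul_le_mul_of_nonneg_right hε2.le h2,
      mul_le_mul_of_nonneg_right hε3.le h3, mul_le_mul_of_nonneg_right hε4.le h4]
  obtain ⟨hWto, hSto⟩ := tendsto_disease_free_of_infection_margin (by positivity)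
    (hSss ▸ div_nonneg (mul_nonneg hK.le (sub_nonneg.2 hbμ0.le)) hb.le) hε hS' hW' hS0
    (fun t ht => (hnonneg t ht).1)
    (fun t ht => by obtain ⟨-, h1, h2, h3, h4⟩ := hnonneg t ht; simp only [W]; positivity)
    (fun t ht => by obtain ⟨-, h1, h2, h3, -⟩ := hnonneg t ht; simp only [A]; positivity)
    hA_cont hA_le hmargin
  have hsqueeze : ∀ X : ℝ → ℝ, (∀ t ≥ (0 : ℝ), 0 ≤ X t ∧ X t ≤ W t) → Tendsto X atTop (𝓝 0) :=
    fun X hX => squeeze_zero' (eventually_atTop.2 ⟨0, fun t ht => (hX t ht).1⟩)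
      (eventually_atTop.2 ⟨0, fun t ht => (hX t ht).2⟩) hWto
  refine ⟨hsqueeze I1 ?_, hsqueeze I2 ?_, hsqueeze I12 ?_, hsqueeze R ?_, hSto⟩ <;>
  · intro t ht
    obtain ⟨-, h1, h2, h3, h4⟩ := hnonneg t ht
    simp only [W]
    constructor <;> linarith

/-- Global stability of the disease-free equilibrium `G₂`.
If `μ₀ < μ₄' < μⱼ'` for `j = 1,2,3` and
`S** < min ((μ₁'-μ₀)/α₁) (min ((μ₂'-μ₀)/α₂) ((μ₃'-μ₀)/α̂₃))` with `α̂₃ = β₁+β₂+α₃`,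
then all infected and recovered classes tend to `0` and `S` tends to `S**`. -/
theorem stmt_19
    (b K α1 α2 α3 β1 β2 γ1 γ2 η1 η2 ρ1 ρ2 ρ3 μ0 μ1' μ2' μ3' μ4' : ℝ)
    (hb : 0 < b) (hK : 0 < K) (hα1 : 0 < α1) (hα2 : 0 < α2) (hα3 : 0 < α3)
    (hβ1 : 0 < β1) (hβ2 : 0 < β2) (hγ1 : 0 < γ1) (hγ2 : 0 < γ2)
    (hη1 : 0 < η1) (hη2 : 0 < η2) (hρ1 : 0 < ρ1) (hρ2 : 0 < ρ2) (hρ3 : 0 < ρ3)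
    (hμ0 : 0 < μ0) (hμ1' : 0 < μ1') (hμ2' : 0 < μ2') (hμ3' : 0 < μ3') (hμ4' : 0 < μ4')
    (hbμ0 : μ0 < b)
    (hμ04 : μ0 < μ4') (hμ41 : μ4' < μ1') (hμ42 : μ4' < μ2') (hμ43 : μ4' < μ3')
    (μ1 μ2 μ3 : ℝ) (hμ1 : μ1 = ρ1 + μ1') (hμ2 : μ2 = ρ2 + μ2') (hμ3 : μ3 = ρ3 + μ3')
    (S I1 I2 I12 R N : ℝ → ℝ)
    (hN : ∀ t, N t = S t + I1 t + I2 t + I12 t + R t)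
    (hS : ∀ t ≥ (0:ℝ), HasDerivAt S
      ((b * (1 - N t / K) - α1 * I1 t - α2 * I2 t - (β1 + β2 + α3) * I12 t - μ0) * S t) t)
    (hI1 : ∀ t ≥ (0:ℝ), HasDerivAt I1
      ((b * (1 - N t / K) + α1 * S t - η1 * I12 t - γ1 * I2 t - μ1) * I1 t
        + β1 * S t * I12 t) t)
    (hI2 : ∀ t ≥ (0:ℝ), HasDerivAt I2
      ((b * (1 - N t / K) + α2 * S t - η2 * I12 t - γ2 * I1 t - μ2) * I2 t
        + β2 * S t * I12 t) t)
    (hI12 : ∀ t ≥ (0:ℝ), HasDerivAt I12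
      ((b * (1 - N t / K) + α3 * S t + η1 * I1 t + η2 * I2 t - μ3) * I12 t
        + (γ1 + γ2) * I1 t * I2 t) t)
    (hR : ∀ t ≥ (0:ℝ), HasDerivAt R
      ((b * (1 - N t / K) - μ4') * R t + ρ1 * I1 t + ρ2 * I2 t + ρ3 * I12 t) t)
    (hnonneg : ∀ t ≥ (0:ℝ), 0 ≤ S t ∧ 0 ≤ I1 t ∧ 0 ≤ I2 t ∧ 0 ≤ I12 t ∧ 0 ≤ R t)
    (hS0 : 0 < S 0)
    (Sss : ℝ) (hSss : Sss = K * (b - μ0) / b)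
    (hsmall : Sss < min ((μ1' - μ0) / α1) (min ((μ2' - μ0) / α2)
        ((μ3' - μ0) / (β1 + β2 + α3)))) :
    Tendsto I1 atTop (𝓝 0) ∧ Tendsto I2 atTop (𝓝 0) ∧ Tendsto I12 atTop (𝓝 0)
      ∧ Tendsto R atTop (𝓝 0) ∧ Tendsto S atTop (𝓝 Sss) :=
  stmt_19_general b K α1 α2 α3 β1 β2 γ1 γ2 η1 η2 ρ1 ρ2 ρ3 μ0 μ1' μ2' μ3' μ4' hb hK hα1 hα2 hα3 hβ1
    hβ2 hbμ0 hμ04 μ1 μ2 μ3 hμ1 hμ2 hμ3 S I1 I2 I12 R N hN hS hI1 hI2 hI12 hR hnonneg hS0 Sss hSss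
    hsmall
end
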